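/- arXiv:2507.03426 — 4 statements merged into one kernel-verified Lean document; each statement's English description precedes it below -/
import Mathlib

section
/- Let V be a Hausdorff locally convex topological vector space over ℝ with continuous dual V', and let ρ : V → [0,∞] be convex, symmetric, lower semicontinuous with ρ(0) = 0. Then every φ in the modular cone M(ρ*) of the convex conjugate ρ* restricts to a bounded linear functional on the seminormed space (M(ρ), ‖·‖_{L,ρ}), and for all φ ∈ M(ρ*): ‖φ‖_{O,ρ*} equals the operator norm of φ on (M(ρ), ‖·‖_{L,ρ}), and ‖φ‖_{L,ρ*} equals the operator norm of φ on (M(ρ), ‖·‖_{O,ρ}). -/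
open scoped ENNReal NNReal

noncomputable section

/-- A `[0,∞]`-valued functional on a real vector space is convex. -/
def ConvexENNReal {W : Type*} [AddCommGroup W] [Module ℝ W] (ρ : W → ℝ≥0∞) : Prop :=
  ∀ (x y : W) (a b : ℝ), 0 ≤ a → 0 ≤ b → a + b = 1 →
    ρ (a • x + b • y) ≤ ENNReal.ofReal a * ρ x + ENNReal.ofReal b * ρ y

/-- The modular cone `M(ρ) = {λ • x : λ ≥ 0, ρ x < ∞}`. -/
def modularCone {W : Type*} [AddCommGroup W] [Module ℝ W] (ρ : W → ℝ≥0∞) : Set W :=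
  {x | ∃ (lam : ℝ) (y : W), 0 ≤ lam ∧ ρ y ≠ ⊤ ∧ x = lam • y}

/-- The Luxemburg functional `‖x‖_L = inf {λ > 0 : ρ (λ⁻¹ x) ≤ 1}` (equal to `∞` outside
the modular cone, where no admissible `λ` exists). -/
noncomputable def luxemburg {W : Type*} [AddCommGroup W] [Module ℝ W]
    (ρ : W → ℝ≥0∞) (x : W) : ℝ≥0∞ :=
  ⨅ (lam : ℝ) (_ : 0 < lam) (_ : ρ (lam⁻¹ • x) ≤ 1), ENNReal.ofReal lam

section AuxRay
variable {W : Type*} [AddCommGroup W] [Module ℝ W]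

lemma rho_smul_le {ρ : W → ℝ≥0∞} (hconv : ConvexENNReal ρ) (h0 : ρ 0 = 0)
    {a : ℝ} (ha0 : 0 ≤ a) (ha1 : a ≤ 1) (x : W) : ρ (a • x) ≤ ρ x := by
  have h := hconv x 0 a (1 - a) ha0 (by linarith) (by ring)
  simp only [smul_zero, add_zero, h0, mul_zero] at h
  calc ρ (a • x) ≤ ENNReal.ofReal a * ρ x := h
    _ ≤ 1 * ρ x := by gcongr; exact ENNReal.ofReal_le_one.mpr ha1
    _ = ρ x := one_mul _

end AuxRay

variable {V : Type*} [AddCommGroup V] [Module ℝ V] [TopologicalSpace V]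
  [IsTopologicalAddGroup V] [ContinuousSMul ℝ V] [T2Space V] [LocallyConvexSpace ℝ V]

/-- The convex conjugate `ρ*(φ) = sup_x (φ x − ρ x)` on the continuous dual. -/
noncomputable def conjFn (ρ : V → ℝ≥0∞) (φ : V →L[ℝ] ℝ) : ℝ≥0∞ :=
  ⨆ x : V, ENNReal.ofReal (φ x) - ρ x

/-- The Orlicz functional `‖x‖_O = sup {φ x : φ ∈ V', ρ*(φ) ≤ 1}`. -/
noncomputable def orlicz (ρ : V → ℝ≥0∞) (x : V) : ℝ≥0∞ :=
  ⨆ (φ : V →L[ℝ] ℝ) (_ : conjFn ρ φ ≤ 1), ENNReal.ofReal (φ x)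

/-- The Orlicz functional of `ρ*` (for lower semicontinuous `ρ`):
`‖φ‖_{O,ρ*} = sup {φ x : x ∈ V, ρ x ≤ 1}`. -/
noncomputable def orliczDual (ρ : V → ℝ≥0∞) (φ : V →L[ℝ] ℝ) : ℝ≥0∞ :=
  ⨆ (x : V) (_ : ρ x ≤ 1), ENNReal.ofReal (φ x)

/-- If the Luxemburg functional of a convex lsc `ρ` is at most `1`, then `ρ x ≤ 1`. -/
lemma lux_le_one {ρ : V → ℝ≥0∞} (hconv : ConvexENNReal ρ) (h0 : ρ 0 = 0)
    (hlsc : LowerSemicontinuous ρ) {x : V} (hx : luxemburg ρ x ≤ 1) : ρ x ≤ 1 := by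
  have key : ∀ t : ℝ, 1 < t → ρ (t⁻¹ • x) ≤ 1 := by
    intro t ht
    have hlt : luxemburg ρ x < ENNReal.ofReal t := by
      calc luxemburg ρ x ≤ 1 := hx
        _ < ENNReal.ofReal t := by
            rw [← ENNReal.ofReal_one]
            exact ENNReal.ofReal_lt_ofReal_iff (by linarith) |>.mpr ht
    simp only [luxemburg, iInf_lt_iff, exists_prop] at hlt
    obtain ⟨lam, hlam, hρlam, hlamt⟩ := hlt
    have hlamt' : lam < t := (ENNReal.ofReal_lt_ofReal_iff (by linarith)).mp hlamt
    have heq : t⁻¹ • x = (t⁻¹ * lam) • (lam⁻¹ • x) := by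
      rw [smul_smul]; congr 1; field_simp
    rw [heq]
    exact le_trans (rho_smul_le hconv h0 (by positivity)
      (by rw [inv_mul_le_iff₀ (by linarith)]; simpa using hlamt'.le) _) hρlam
  by_contra hcon
  push_neg at hcon
  have hev := hlsc x 1 hcon
  have hcont : Filter.Tendsto (fun t : ℝ => t⁻¹ • x) (nhdsWithin 1 (Set.Ioi 1)) (nhds x) := by
    have h1 : Filter.Tendsto (fun t : ℝ => t⁻¹ • x) (nhds 1) (nhds x) := by
      have h2 : Filter.Tendsto (fun t : ℝ => t⁻¹) (nhds (1:ℝ)) (nhds (1:ℝ)⁻¹) :=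
        (continuousAt_inv₀ one_ne_zero).tendsto
      simpa using h2.smul_const x
    exact h1.mono_left nhdsWithin_le_nhds
  obtain ⟨t, h1t, h2t⟩ := ((hcont.eventually hev).and eventually_mem_nhdsWithin).exists
  exact absurd (key t h2t) (not_le.mpr h1t)

/-- Young's inequality for the conjugate. -/
lemma young (ρ : V → ℝ≥0∞) (ψ : V →L[ℝ] ℝ) (x : V) :
    ENNReal.ofReal (ψ x) ≤ conjFn ρ ψ + ρ x :=
  tsub_le_iff_right.mp (le_iSup (fun x => ENNReal.ofReal (ψ x) - ρ x) x)

/-- The conjugate of a symmetric functional is symmetric. -/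
lemma conj_neg {ρ : V → ℝ≥0∞} (hsym : ∀ x : V, ρ (-x) = ρ x) (ψ : V →L[ℝ] ℝ) :
    conjFn ρ (-ψ) = conjFn ρ ψ := by
  unfold conjFn
  apply le_antisymm <;>
    refine iSup_le fun x => le_iSup_of_le (-x) (le_of_eq ?_) <;>
      simp [hsym]

/-- **Duality of Luxemburg and Orlicz seminorms** (Corollary 2.4):
every `φ ∈ M(ρ*)` is a bounded linear functional on `(M(ρ), ‖·‖_L)`, its `ρ*`-Orlicz
seminorm is its operator norm w.r.t. the Luxemburg seminorm, and its `ρ*`-Luxemburg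
seminorm is its operator norm w.r.t. the Orlicz seminorm. -/
theorem duality_luxemburg_orlicz (ρ : V → ℝ≥0∞)
    (hconv : ConvexENNReal ρ) (h0 : ρ 0 = 0) (hsym : ∀ x : V, ρ (-x) = ρ x)
    (hlsc : LowerSemicontinuous ρ) :
    ∀ φ : V →L[ℝ] ℝ, φ ∈ modularCone (conjFn ρ) →
      (∃ C : ℝ, 0 ≤ C ∧ ∀ x ∈ modularCone ρ,
        ENNReal.ofReal |φ x| ≤ ENNReal.ofReal C * luxemburg ρ x) ∧
      orliczDual ρ φ =
        (⨆ (x : V) (_ : x ∈ modularCone ρ) (_ : luxemburg ρ x ≤ 1), ENNReal.ofReal |φ x|) ∧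
      luxemburg (conjFn ρ) φ =
        (⨆ (x : V) (_ : x ∈ modularCone ρ) (_ : orlicz ρ x ≤ 1), ENNReal.ofReal |φ x|) := by
  intro φ hφ
  refine ⟨?_, ?_, ?_⟩
  · -- Part 1 : boundedness
    obtain ⟨μ, ψ, hμ, hψ, rfl⟩ := hφ
    rcases hμ.eq_or_lt with hμ0 | hμ0
    · refine ⟨0, le_refl 0, fun x _ => ?_⟩
      subst hμ0
      simp
    · set K : ℝ := 1 + (conjFn ρ ψ).toReal with hK
      have hK1 : 1 ≤ K := by
        have := ENNReal.toReal_nonneg (a := conjFn ρ ψ); linarith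
      have hK0 : 0 < K := by linarith
      refine ⟨μ * K, by positivity, fun x _ => ?_⟩
      have habs : ∀ z : V, ρ z ≤ 1 → |ψ z| ≤ K := by
        intro z hz
        have hone : ∀ w : V, ρ w ≤ 1 → ψ w ≤ K := by
          intro w hw
          have h1 : ENNReal.ofReal (ψ w) ≤ ENNReal.ofReal K := by
            calc ENNReal.ofReal (ψ w) ≤ conjFn ρ ψ + ρ w := young ρ ψ w
              _ ≤ conjFn ρ ψ + 1 := by gcongr
              _ = ENNReal.ofReal K := by
                  rw [hK, ENNReal.ofReal_add (by norm_num) ENNReal.toReal_nonneg,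
                    ENNReal.ofReal_one, ENNReal.ofReal_toReal hψ, add_comm]
          exact (ENNReal.ofReal_le_ofReal_iff hK0.le).mp h1
        have h2 : ψ z ≤ K := hone z hz
        have h3 : -(ψ z) ≤ K := by
          have := hone (-z) (by rw [hsym]; exact hz)
          simpa using this
        exact abs_le.mpr ⟨by linarith, h2⟩
      have hCpos : (0:ℝ) < μ * K := by positivity
      have hCne : ENNReal.ofReal (μ * K) ≠ 0 := by
        simp [ENNReal.ofReal_eq_zero, not_le, hCpos]
      have hCtop : ENNReal.ofReal (μ * K) ≠ ⊤ := ENNReal.ofReal_ne_top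
      have hdiv : ENNReal.ofReal |(μ • ψ) x| / ENNReal.ofReal (μ * K) ≤ luxemburg ρ x := by
        unfold luxemburg
        refine le_iInf fun lam => le_iInf fun hlam => le_iInf fun hρlam => ?_
        rw [ENNReal.div_le_iff_le_mul (Or.inl hCne) (Or.inl hCtop)]
        have hψb : |ψ (lam⁻¹ • x)| ≤ K := habs _ hρlam
        have hlin : ψ (lam⁻¹ • x) = lam⁻¹ * ψ x := by
          rw [map_smul]; simp
        have hb : |(μ • ψ) x| ≤ (μ * K) * lam := by
          have hψx : |ψ x| ≤ K * lam := by
            rw [hlin, abs_mul, abs_inv, abs_of_pos hlam] at hψb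
            calc |ψ x| = lam * (lam⁻¹ * |ψ x|) := by field_simp
              _ ≤ lam * K := by
                  apply mul_le_mul_of_nonneg_left _ hlam.le
                  exact hψb
              _ = K * lam := mul_comm _ _
          have : |(μ • ψ) x| = μ * |ψ x| := by
            simp [abs_mul, abs_of_pos hμ0]
          rw [this]
          calc μ * |ψ x| ≤ μ * (K * lam) := by
                apply mul_le_mul_of_nonneg_left hψx hμ0.le
            _ = (μ * K) * lam := by ring
        calc ENNReal.ofReal |(μ • ψ) x| ≤ ENNReal.ofReal ((μ * K) * lam) :=
              ENNReal.ofReal_le_ofReal hb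
          _ = ENNReal.ofReal lam * ENNReal.ofReal (μ * K) := by
              rw [mul_comm (μ * K) lam, ENNReal.ofReal_mul hlam.le]
      calc ENNReal.ofReal |(μ • ψ) x|
          = ENNReal.ofReal (μ * K) * (ENNReal.ofReal |(μ • ψ) x| / ENNReal.ofReal (μ * K)) :=
            (ENNReal.mul_div_cancel hCne hCtop).symm
        _ ≤ ENNReal.ofReal (μ * K) * luxemburg ρ x := by gcongr
  · -- Part 2 : Orlicz dual = operator norm w.r.t. Luxemburg
    apply le_antisymm
    · refine iSup_le fun x => iSup_le fun hx => ?_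
      have hxM : x ∈ modularCone ρ :=
        ⟨1, x, zero_le_one, (hx.trans_lt ENNReal.one_lt_top).ne, (one_smul ℝ x).symm⟩
      have hlux : luxemburg ρ x ≤ 1 := by
        have : luxemburg ρ x ≤ ENNReal.ofReal 1 :=
          iInf_le_of_le 1 (iInf_le_of_le one_pos (iInf_le_of_le (by simpa using hx) le_rfl))
        simpa using this
      refine le_iSup_of_le x (le_iSup_of_le hxM (le_iSup_of_le hlux ?_))
      exact ENNReal.ofReal_le_ofReal (le_abs_self _)
    · refine iSup_le fun x => iSup_le fun _ => iSup_le fun hlux => ?_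
      have hρx : ρ x ≤ 1 := lux_le_one hconv h0 hlsc hlux
      rcases le_or_gt 0 (φ x) with hpos | hneg
      · refine le_iSup_of_le x (le_iSup_of_le hρx (le_of_eq ?_))
        rw [abs_of_nonneg hpos]
      · refine le_iSup_of_le (-x) (le_iSup_of_le (by rw [hsym]; exact hρx) (le_of_eq ?_))
        rw [map_neg, abs_of_neg hneg]
  · -- Part 3 : Luxemburg of conjugate = operator norm w.r.t. Orlicz
    set S := ⨆ (x : V) (_ : x ∈ modularCone ρ) (_ : orlicz ρ x ≤ 1), ENNReal.ofReal |φ x|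
      with hS
    apply le_antisymm
    · by_cases hStop : S = ⊤
      · rw [hStop]; exact le_top
      have main : ∀ lam : ℝ, S < ENNReal.ofReal lam → conjFn ρ (lam⁻¹ • φ) ≤ 1 := by
        intro lam hlam
        have hlam0 : 0 < lam := ENNReal.ofReal_pos.mp ((show (0:ℝ≥0∞) ≤ S from zero_le).trans_lt hlam)
        refine iSup_le fun x => tsub_le_iff_right.mpr ?_
        by_cases hx : ρ x = ⊤
        · rw [hx]; simp
        set c := orlicz ρ x with hc
        have hc1 : c ≤ 1 + ρ x := by
          refine iSup_le fun ψ => iSup_le fun hψ => ?_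
          calc ENNReal.ofReal (ψ x) ≤ conjFn ρ ψ + ρ x := young ρ ψ x
            _ ≤ 1 + ρ x := by gcongr
        have hcT : c ≠ ⊤ := by
          refine (hc1.trans_lt ?_).ne
          rw [lt_top_iff_ne_top]
          simp [hx]
        have hstep : ∀ t : ℝ, c.toReal < t → lam⁻¹ * |φ x| ≤ t := by
          intro t ht
          have ht0 : 0 < t := ENNReal.toReal_nonneg.trans_lt ht
          have hmem : t⁻¹ • x ∈ modularCone ρ := ⟨t⁻¹, x, by positivity, hx, rfl⟩
          have horl : orlicz ρ (t⁻¹ • x) ≤ 1 := by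
            refine iSup_le fun ψ => iSup_le fun hψ => ?_
            have heq : ENNReal.ofReal (ψ (t⁻¹ • x))
                = ENNReal.ofReal t⁻¹ * ENNReal.ofReal (ψ x) := by
              rw [map_smul, smul_eq_mul, ENNReal.ofReal_mul (by positivity)]
            calc ENNReal.ofReal (ψ (t⁻¹ • x))
                = ENNReal.ofReal t⁻¹ * ENNReal.ofReal (ψ x) := heq
              _ ≤ ENNReal.ofReal t⁻¹ * c := by
                  gcongr
                  exact le_iSup_of_le ψ (le_iSup_of_le hψ le_rfl)
              _ ≤ ENNReal.ofReal t⁻¹ * ENNReal.ofReal t := by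
                  gcongr
                  rw [← ENNReal.ofReal_toReal hcT]
                  exact ENNReal.ofReal_le_ofReal ht.le
              _ = 1 := by
                  rw [← ENNReal.ofReal_mul (by positivity), inv_mul_cancel₀ ht0.ne',
                    ENNReal.ofReal_one]
          have hSle : ENNReal.ofReal |φ (t⁻¹ • x)| ≤ S :=
            le_iSup_of_le (t⁻¹ • x) (le_iSup_of_le hmem (le_iSup_of_le horl le_rfl))
          have hlt : |φ (t⁻¹ • x)| < lam :=
            (ENNReal.ofReal_lt_ofReal_iff hlam0).mp (hSle.trans_lt hlam)
          have habs : |φ (t⁻¹ • x)| = t⁻¹ * |φ x| := by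
            rw [map_smul, smul_eq_mul, abs_mul, abs_inv, abs_of_pos ht0]
          rw [habs] at hlt
          rw [inv_mul_le_iff₀ hlam0]
          rw [inv_mul_lt_iff₀ ht0] at hlt
          linarith [hlt.le]
        have hfin : lam⁻¹ * |φ x| ≤ c.toReal := by
          by_contra hcon
          push_neg at hcon
          obtain ⟨t, h1, h2⟩ := exists_between hcon
          exact absurd (hstep t h1) (not_le.mpr h2)
        calc ENNReal.ofReal ((lam⁻¹ • φ) x) ≤ ENNReal.ofReal (lam⁻¹ * |φ x|) := by
              apply ENNReal.ofReal_le_ofReal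
              simp only [ContinuousLinearMap.smul_apply, smul_eq_mul]
              exact mul_le_mul_of_nonneg_left (le_abs_self _) (by positivity)
          _ ≤ ENNReal.ofReal c.toReal := ENNReal.ofReal_le_ofReal hfin
          _ = c := ENNReal.ofReal_toReal hcT
          _ ≤ 1 + ρ x := hc1
      have hlux_le : ∀ lam : ℝ, S < ENNReal.ofReal lam →
          luxemburg (conjFn ρ) φ ≤ ENNReal.ofReal lam := by
        intro lam hlam
        have hlam0 : 0 < lam := ENNReal.ofReal_pos.mp ((show (0:ℝ≥0∞) ≤ S from zero_le).trans_lt hlam)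
        exact iInf_le_of_le lam (iInf_le_of_le hlam0 (iInf_le_of_le (main lam hlam) le_rfl))
      by_contra hcon
      push_neg at hcon
      obtain ⟨r, hr0, hr1, hr2⟩ := (ENNReal.lt_iff_exists_real_btwn).mp hcon
      exact absurd (hlux_le r hr1) (not_le.mpr hr2)
    · refine iSup_le fun x => iSup_le fun _ => iSup_le fun horl => ?_
      refine le_iInf fun lam => le_iInf fun hlam => le_iInf fun hconj => ?_
      have h1 : ENNReal.ofReal ((lam⁻¹ • φ) x) ≤ 1 := by
        refine le_trans ?_ horl
        exact le_iSup₂_of_le (lam⁻¹ • φ) hconj le_rfl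
      have h2 : ENNReal.ofReal ((-(lam⁻¹ • φ)) x) ≤ 1 := by
        refine le_trans ?_ horl
        refine le_iSup₂_of_le (-(lam⁻¹ • φ)) ?_ le_rfl
        rw [conj_neg hsym]; exact hconj
      have h1' : lam⁻¹ * φ x ≤ 1 := by
        have := ENNReal.ofReal_le_one.mp h1
        simpa using this
      have h2' : -(lam⁻¹ * φ x) ≤ 1 := by
        have := ENNReal.ofReal_le_one.mp h2
        simpa using this
      have habs : |φ x| ≤ lam := by
        have h3 : |lam⁻¹ * φ x| ≤ 1 := abs_le.mpr ⟨by linarith, h1'⟩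
        rw [abs_mul, abs_inv, abs_of_pos hlam, inv_mul_le_iff₀ hlam] at h3
        simpa using h3
      exact ENNReal.ofReal_le_ofReal habs
end
end

section
/- Let V be a Hausdorff locally convex topological vector space over ℝ, let 1 ≤ p < ∞ with conjugate exponent q (1/p + 1/q = 1, q = ∞ for p = 1), and let ρ : V → [0,∞] be convex, lower semicontinuous, positively p-homogeneous with ρ(0) = 0. Then for all x ∈ D(ρ): if p > 1, ‖x‖_{L,ρ}^p = ρ(x) = ((q−1)/q^p) · ‖x‖_{O,ρ}^p; and if p = 1, ‖x‖_{L,ρ} = ρ(x) = ‖x‖_{O,ρ}. -/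
open scoped ENNReal NNReal

set_option linter.unusedSectionVars false

noncomputable section

variable {V : Type*} [AddCommGroup V] [Module ℝ V] [TopologicalSpace V]
  [IsTopologicalAddGroup V] [ContinuousSMul ℝ V] [T2Space V] [LocallyConvexSpace ℝ V]

/-- `ρ` is positively `p`-homogeneous: `ρ (λ • x) = λ^p • ρ x` for `λ ≥ 0`. -/
def PosHomogeneous {W : Type*} [AddCommGroup W] [Module ℝ W] (p : ℝ) (ρ : W → ℝ≥0∞) : Prop :=
  ∀ (lam : ℝ), 0 ≤ lam → ∀ x : W, ρ (lam • x) = ENNReal.ofReal (lam ^ p) * ρ x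

/-! ### Auxiliary real arithmetic for conjugate exponents -/

section RealAux

variable {p q : ℝ}

lemma aux_q_pos (hp : 1 < p) (hpq : p⁻¹ + q⁻¹ = 1) : 0 < q := by
  have hp0 : 0 < p := lt_trans zero_lt_one hp
  have h1 : p⁻¹ < 1 := by
    rw [inv_lt_one_iff₀]; right; exact hp
  have h2 : 0 < q⁻¹ := by linarith
  exact inv_pos.mp h2

lemma aux_key (hp : 1 < p) (hpq : p⁻¹ + q⁻¹ = 1) : p + q = p * q := by
  have hp0 : 0 < p := lt_trans zero_lt_one hp
  have hq0 : 0 < q := aux_q_pos hp hpq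
  field_simp at hpq
  linarith

lemma aux_q_lt (hp : 1 < p) (hpq : p⁻¹ + q⁻¹ = 1) : 1 < q := by
  have hq0 : 0 < q := aux_q_pos hp hpq
  have hkey := aux_key hp hpq
  nlinarith

lemma aux_rpow_split {x : ℝ} (hx : 0 < x) (p : ℝ) : x ^ p = x ^ (p - 1) * x := by
  have h : x ^ (p - 1 + 1) = x ^ (p - 1) * x ^ (1 : ℝ) := Real.rpow_add hx _ _
  rw [Real.rpow_one] at h
  rw [← h, sub_add_cancel]

/-- Young's inequality in the form we need. -/
lemma aux_young (hp : 1 < p) (hpq : p⁻¹ + q⁻¹ = 1) {a t : ℝ} (ha : 0 ≤ a) (ht : 0 ≤ t) :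
    t * a - t ^ q ≤ (q - 1) / q ^ p * a ^ p := by
  have hp0 : 0 < p := lt_trans zero_lt_one hp
  have hq0 : 0 < q := aux_q_pos hp hpq
  have hkey := aux_key hp hpq
  set c := q ^ q⁻¹ with hc
  have hc0 : 0 < c := Real.rpow_pos_of_pos hq0 _
  have hyoung := Real.young_inequality_of_nonneg (div_nonneg ha hc0.le)
    (mul_nonneg ht hc0.le) (Real.holderConjugate_iff.mpr ⟨hp, hpq⟩)
  have h1 : a / c * (t * c) = t * a := by field_simp
  have h2 : (t * c) ^ q = t ^ q * q := by
    rw [Real.mul_rpow ht hc0.le, hc, ← Real.rpow_mul hq0.le, inv_mul_cancel₀ hq0.ne',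
      Real.rpow_one]
  have hiq : q⁻¹ * p = p - 1 := by
    field_simp
    linarith
  have h3 : (a / c) ^ p = a ^ p / q ^ (p - 1) := by
    rw [Real.div_rpow ha hc0.le, hc, ← Real.rpow_mul hq0.le, hiq]
  have hqp : q ^ p = q ^ (p - 1) * q := aux_rpow_split hq0 p
  have hqpm : 0 < q ^ (p - 1) := Real.rpow_pos_of_pos hq0 _
  have h4 : (q - 1) / q ^ p * a ^ p = a ^ p / q ^ (p - 1) / p := by
    rw [hqp]
    have hq1 : (q - 1) * p = q := by linarith
    field_simp
    linear_combination a ^ p * hq1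
  rw [h1, h2, h3] at hyoung
  rw [h4]
  have : t ^ q * q / q = t ^ q := by field_simp
  rw [this] at hyoung
  linarith

/-- Equality case of Young's inequality: the optimal `t`. -/
lemma aux_young_opt (hp : 1 < p) (hpq : p⁻¹ + q⁻¹ = 1) {a : ℝ} (ha : 0 < a) :
    ∃ t : ℝ, 0 < t ∧ t * a - t ^ q = (q - 1) / q ^ p * a ^ p := by
  have hp0 : 0 < p := lt_trans zero_lt_one hp
  have hq0 : 0 < q := aux_q_pos hp hpq
  have hkey := aux_key hp hpq
  have hu0 : 0 < a / q := div_pos ha hq0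
  refine ⟨(a / q) ^ (p - 1), Real.rpow_pos_of_pos hu0 _, ?_⟩
  have h1 : ((a / q) ^ (p - 1)) ^ q = (a / q) ^ p := by
    rw [← Real.rpow_mul hu0.le]
    congr 1
    nlinarith
  rw [h1]
  have e1 : (a / q) ^ (p - 1) = a ^ (p - 1) / q ^ (p - 1) := Real.div_rpow ha.le hq0.le _
  have e2 : a ^ p = a ^ (p - 1) * a := aux_rpow_split ha p
  have e3 : q ^ p = q ^ (p - 1) * q := aux_rpow_split hq0 p
  have e4 : (a / q) ^ p = (a / q) ^ (p - 1) * (a / q) := aux_rpow_split hu0 p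
  have hqpm : 0 < q ^ (p - 1) := Real.rpow_pos_of_pos hq0 _
  rw [e4, e1, e2, e3]
  field_simp

end RealAux

/-! ### The Luxemburg functional of a homogeneous functional -/

lemma lux_rpow {W : Type*} [AddCommGroup W] [Module ℝ W] {p : ℝ} (hp : 0 < p)
    (ρ : W → ℝ≥0∞) (hhom : PosHomogeneous p ρ) (x : W) (hx : ρ x ≠ ⊤) :
    luxemburg ρ x ^ p = ρ x := by
  rcases eq_or_ne (ρ x) 0 with hr | hr
  · have hlez : luxemburg ρ x = 0 := by
      refine le_antisymm (ENNReal.le_of_forall_pos_le_add fun ε hε _ => ?_) (zero_le)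
      rw [zero_add]
      have hε' : (0 : ℝ) < (ε : ℝ) := hε
      have hcond : ρ ((ε : ℝ)⁻¹ • x) ≤ 1 := by
        rw [hhom ((ε : ℝ))⁻¹ (inv_nonneg.2 hε'.le), hr, mul_zero]
        exact zero_le_one
      calc luxemburg ρ x ≤ ENNReal.ofReal (ε : ℝ) := by
            refine iInf_le_of_le (ε : ℝ) ?_
            exact iInf_le_of_le hε' (iInf_le_of_le hcond le_rfl)
        _ = (ε : ℝ≥0∞) := ENNReal.ofReal_coe_nnreal
    rw [hlez, hr, ENNReal.zero_rpow_of_pos hp]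
  · have hr0 : 0 < (ρ x).toReal := ENNReal.toReal_pos hr hx
    set lam0 : ℝ := (ρ x).toReal ^ p⁻¹ with hlam0def
    have hlam0 : 0 < lam0 := Real.rpow_pos_of_pos hr0 _
    have hlam0p : lam0 ^ p = (ρ x).toReal := by
      rw [hlam0def, ← Real.rpow_mul hr0.le, inv_mul_cancel₀ hp.ne', Real.rpow_one]
    have hlux : luxemburg ρ x = ENNReal.ofReal lam0 := by
      refine le_antisymm ?_ ?_
      · have hcond : ρ (lam0⁻¹ • x) ≤ 1 := by
          rw [hhom _ (inv_nonneg.2 hlam0.le), Real.inv_rpow hlam0.le, hlam0p,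
            ENNReal.ofReal_inv_of_pos hr0, ENNReal.ofReal_toReal hx,
            ENNReal.inv_mul_cancel hr hx]
        exact iInf_le_of_le lam0 (iInf_le_of_le hlam0 (iInf_le_of_le hcond le_rfl))
      · refine le_iInf fun lam => le_iInf fun hlam => le_iInf fun hcond => ?_
        rw [hhom _ (inv_nonneg.2 hlam.le)] at hcond
        have hle : ρ x ≤ ENNReal.ofReal (lam ^ p) := by
          have := mul_le_mul_right hcond (ENNReal.ofReal (lam ^ p))
          rw [mul_one, ← mul_assoc, ← ENNReal.ofReal_mul (Real.rpow_pos_of_pos hlam _).le,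
            Real.inv_rpow hlam.le, mul_inv_cancel₀ (Real.rpow_pos_of_pos hlam _).ne',
            ENNReal.ofReal_one, one_mul] at this
          exact this
        have htR : (ρ x).toReal ≤ lam ^ p :=
          (ENNReal.le_ofReal_iff_toReal_le hx (Real.rpow_pos_of_pos hlam _).le).mp hle
        have : lam0 ≤ lam := by
          calc lam0 = (ρ x).toReal ^ p⁻¹ := rfl
            _ ≤ (lam ^ p) ^ p⁻¹ := Real.rpow_le_rpow hr0.le htR (inv_nonneg.2 hp.le)
            _ = lam := by
              rw [← Real.rpow_mul hlam.le, mul_inv_cancel₀ hp.ne', Real.rpow_one]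
        exact ENNReal.ofReal_le_ofReal this
    rw [hlux, ENNReal.ofReal_rpow_of_pos hlam0, hlam0p, ENNReal.ofReal_toReal hx]

/-! ### Fenchel–Moreau biconjugation at points of the domain -/

lemma conj_term_le (ρ : V → ℝ≥0∞) (φ : V →L[ℝ] ℝ) (x : V) :
    ENNReal.ofReal (φ x) - conjFn ρ φ ≤ ρ x := by
  rw [tsub_le_iff_right]
  have h : ENNReal.ofReal (φ x) - ρ x ≤ conjFn ρ φ := le_iSup (fun y => ENNReal.ofReal (φ y) - ρ y) x
  rw [tsub_le_iff_right] at h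
  rw [add_comm]
  exact h

lemma biconj (ρ : V → ℝ≥0∞) (hconv : ConvexENNReal ρ) (h0 : ρ 0 = 0)
    (hlsc : LowerSemicontinuous ρ) (x : V) (hx : ρ x ≠ ⊤) :
    ρ x = ⨆ φ : V →L[ℝ] ℝ, (ENNReal.ofReal (φ x) - conjFn ρ φ) := by
  refine le_antisymm ?_ (iSup_le fun φ => conj_term_le ρ φ x)
  refine le_of_forall_lt fun r hr => ?_
  have hrt : r ≠ ⊤ := ne_top_of_lt (lt_of_lt_of_le hr (le_top))
  set c : ℝ := r.toReal with hcdef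
  have hc0 : 0 ≤ c := ENNReal.toReal_nonneg
  have hocr : ENNReal.ofReal c = r := ENNReal.ofReal_toReal hrt
  -- the epigraph
  set S : Set (V × ℝ) := {z | ρ z.1 ≤ ENNReal.ofReal z.2 ∧ 0 ≤ z.2} with hSdef
  have hSconv : Convex ℝ S := by
    rintro ⟨y₁, t₁⟩ ⟨hz₁, ht₁⟩ ⟨y₂, t₂⟩ ⟨hz₂, ht₂⟩ a b haa hbb hab
    refine ⟨?_, add_nonneg (mul_nonneg haa ht₁) (mul_nonneg hbb ht₂)⟩
    simp only [Prod.smul_mk, Prod.mk_add_mk, smul_eq_mul]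
    calc ρ (a • y₁ + b • y₂) ≤ ENNReal.ofReal a * ρ y₁ + ENNReal.ofReal b * ρ y₂ :=
          hconv y₁ y₂ a b haa hbb hab
      _ ≤ ENNReal.ofReal a * ENNReal.ofReal t₁ + ENNReal.ofReal b * ENNReal.ofReal t₂ := by
          gcongr
      _ = ENNReal.ofReal (a * t₁ + b * t₂) := by
          rw [ENNReal.ofReal_add (mul_nonneg haa ht₁) (mul_nonneg hbb ht₂),
            ENNReal.ofReal_mul haa, ENNReal.ofReal_mul hbb]
  have hS1 : IsClosed {z : V × ℝ | ρ z.1 ≤ ENNReal.ofReal z.2} := by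
    rw [← isOpen_compl_iff, isOpen_iff_mem_nhds]
    rintro ⟨y, t⟩ hz
    simp only [Set.mem_compl_iff, Set.mem_setOf_eq, not_le] at hz
    obtain ⟨d, hd1, hd2⟩ := exists_between hz
    have hdt : d ≠ ⊤ := hd2.ne_top
    have hd0 : 0 < d := lt_of_le_of_lt (zero_le) hd1
    have ht : t < d.toReal := by
      rcases le_or_gt 0 t with h | h
      · exact (ENNReal.ofReal_lt_iff_lt_toReal h hdt).mp hd1
      · exact lt_of_lt_of_le h (ENNReal.toReal_nonneg)
    have h1 : {y' : V | d < ρ y'} ∈ nhds y := hlsc y d hd2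
    have h2 : Set.Iio d.toReal ∈ nhds t := Iio_mem_nhds ht
    rw [nhds_prod_eq]
    refine Filter.mem_of_superset (Filter.prod_mem_prod h1 h2) ?_
    rintro ⟨y', t'⟩ ⟨hy', ht'⟩
    simp only [Set.mem_compl_iff, Set.mem_setOf_eq, not_le]
    calc ENNReal.ofReal t' ≤ ENNReal.ofReal d.toReal := ENNReal.ofReal_le_ofReal ht'.le
      _ = d := ENNReal.ofReal_toReal hdt
      _ < ρ y' := hy'
  have hSclosed : IsClosed S := by
    have h2 : IsClosed {z : V × ℝ | 0 ≤ z.2} := isClosed_le continuous_const continuous_snd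
    exact hS1.inter h2
  have hxS : (x, c) ∉ S := by
    rintro ⟨hmem, -⟩
    rw [hocr] at hmem
    exact absurd hr (not_lt.mpr hmem)
  obtain ⟨f, u, hfS, hfx⟩ := geometric_hahn_banach_closed_point hSconv hSclosed hxS
  set φ₀ : V →L[ℝ] ℝ := f.comp (ContinuousLinearMap.inl ℝ V ℝ) with hφ₀def
  set β : ℝ := f (0, 1) with hβdef
  have hsplit : ∀ (y : V) (t : ℝ), f (y, t) = φ₀ y + t * β := by
    intro y t
    have hyt : (y, t) = ((y, (0 : ℝ)) : V × ℝ) + t • ((0 : V), (1 : ℝ)) := by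
      simp [Prod.ext_iff]
    rw [hyt, map_add, map_smul]
    simp [hφ₀def, hβdef, smul_eq_mul]
  -- the point (x, (ρ x).toReal) is in S
  have hmemx : ((x, (ρ x).toReal) : V × ℝ) ∈ S :=
    ⟨by rw [ENNReal.ofReal_toReal hx], ENNReal.toReal_nonneg⟩
  have hcx : c < (ρ x).toReal := by
    rw [hcdef]
    exact (ENNReal.toReal_lt_toReal hrt hx).mpr hr
  have hβneg : β < 0 := by
    have h1 := hfS _ hmemx
    rw [hsplit] at h1
    have h2 := hfx
    rw [hsplit] at h2
    nlinarith
  set γ : ℝ := -β with hγdef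
  have hγ0 : 0 < γ := by rw [hγdef]; linarith
  set φ : V →L[ℝ] ℝ := γ⁻¹ • φ₀ with hφdef
  have hφapp : ∀ y : V, φ y = γ⁻¹ * φ₀ y := fun y => rfl
  set u' : ℝ := u / γ with hu'def
  have hkey : ∀ y : V, ρ y ≠ ⊤ → φ y - (ρ y).toReal < u' := by
    intro y hy
    have hmem : ((y, (ρ y).toReal) : V × ℝ) ∈ S :=
      ⟨by rw [ENNReal.ofReal_toReal hy], ENNReal.toReal_nonneg⟩
    have h1 := hfS _ hmem
    rw [hsplit] at h1
    rw [hφapp, hu'def]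
    rw [div_eq_inv_mul]
    have h2 : φ₀ y - (ρ y).toReal * γ < u := by rw [hγdef]; linarith
    have h3 := (mul_lt_mul_iff_right₀ (inv_pos.mpr hγ0)).mpr h2
    have h4 : γ⁻¹ * (φ₀ y - (ρ y).toReal * γ) = γ⁻¹ * φ₀ y - (ρ y).toReal := by
      rw [mul_sub, mul_comm ((ρ y).toReal) γ, ← mul_assoc, inv_mul_cancel₀ hγ0.ne', one_mul]
    linarith [h3, h4.symm.le]
  have hu'0 : 0 < u' := by
    have := hkey 0 (by rw [h0]; exact ENNReal.zero_ne_top)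
    rw [h0] at this
    simpa using this
  have hconjle : conjFn ρ φ ≤ ENNReal.ofReal u' := by
    refine iSup_le fun y => ?_
    rcases eq_or_ne (ρ y) ⊤ with hy | hy
    · rw [hy, ENNReal.sub_top]; exact zero_le
    · rw [tsub_le_iff_right]
      have h1 : φ y ≤ u' + (ρ y).toReal := by linarith [hkey y hy]
      calc ENNReal.ofReal (φ y) ≤ ENNReal.ofReal (u' + (ρ y).toReal) :=
            ENNReal.ofReal_le_ofReal h1
        _ = ENNReal.ofReal u' + ρ y := by
            rw [ENNReal.ofReal_add hu'0.le ENNReal.toReal_nonneg, ENNReal.ofReal_toReal hy]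
  have hfinal : u' + c < φ x := by
    have h2 := hfx
    rw [hsplit] at h2
    rw [hφapp, hu'def]
    have h3 : u + c * γ < φ₀ x := by rw [hγdef]; nlinarith
    have h4 := (mul_lt_mul_iff_right₀ (inv_pos.mpr hγ0)).mpr h3
    have h5 : γ⁻¹ * (u + c * γ) = u / γ + c := by
      rw [mul_add, mul_comm c γ, ← mul_assoc, inv_mul_cancel₀ hγ0.ne', one_mul,
        inv_mul_eq_div]
    linarith [h4, h5.symm.le]
  calc r = ENNReal.ofReal c := hocr.symm
    _ < ENNReal.ofReal (φ x - u') := by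
        rw [ENNReal.ofReal_lt_ofReal_iff (by linarith)]
        linarith
    _ = ENNReal.ofReal (φ x) - ENNReal.ofReal u' := ENNReal.ofReal_sub _ hu'0.le
    _ ≤ ENNReal.ofReal (φ x) - conjFn ρ φ := tsub_le_tsub_left hconjle _
    _ ≤ ⨆ ψ : V →L[ℝ] ℝ, (ENNReal.ofReal (ψ x) - conjFn ρ ψ) :=
        le_iSup (fun ψ : V →L[ℝ] ℝ => ENNReal.ofReal (ψ x) - conjFn ρ ψ) φ

/-! ### Scaling of the conjugate functional -/

lemma conj_smul_le {p q : ℝ} (hp : 1 < p) (hpq : p⁻¹ + q⁻¹ = 1) (ρ : V → ℝ≥0∞)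
    (hhom : PosHomogeneous p ρ) (φ : V →L[ℝ] ℝ) {t : ℝ} (ht : 0 < t) :
    conjFn ρ (t • φ) ≤ ENNReal.ofReal (t ^ q) * conjFn ρ φ := by
  have hq0 : 0 < q := aux_q_pos hp hpq
  have hkey := aux_key hp hpq
  set s : ℝ := t ^ (q - 1) with hsdef
  have hs0 : 0 < s := Real.rpow_pos_of_pos ht _
  have hts : t * s = t ^ q := by
    rw [hsdef]
    nth_rewrite 1 [← Real.rpow_one t]
    rw [← Real.rpow_add ht]
    congr 1
    ring
  have hsp : s ^ p = t ^ q := by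
    rw [hsdef, ← Real.rpow_mul ht.le]
    congr 1
    nlinarith
  refine iSup_le fun y => ?_
  set z : V := s⁻¹ • y with hzdef
  have hyz : y = s • z := by rw [hzdef, smul_inv_smul₀ hs0.ne']
  have h1 : (t • φ) y = t ^ q * φ z := by
    rw [hyz]
    simp only [ContinuousLinearMap.smul_apply, map_smul, smul_eq_mul]
    rw [← hts]
    ring
  have h2 : ρ y = ENNReal.ofReal (t ^ q) * ρ z := by
    rw [hyz, hhom s hs0.le, hsp]
  rw [h1, h2, ENNReal.ofReal_mul (Real.rpow_pos_of_pos ht q).le,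
    ← ENNReal.mul_sub (fun _ _ => ENNReal.ofReal_ne_top)]
  exact mul_le_mul_right (le_iSup (fun w => ENNReal.ofReal (φ w) - ρ w) z) _

lemma conj_smul_eq {p q : ℝ} (hp : 1 < p) (hpq : p⁻¹ + q⁻¹ = 1) (ρ : V → ℝ≥0∞)
    (hhom : PosHomogeneous p ρ) (φ : V →L[ℝ] ℝ) {t : ℝ} (ht : 0 < t) :
    conjFn ρ (t • φ) = ENNReal.ofReal (t ^ q) * conjFn ρ φ := by
  refine le_antisymm (conj_smul_le hp hpq ρ hhom φ ht) ?_
  have h2 := conj_smul_le hp hpq ρ hhom (t • φ) (inv_pos.2 ht)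
  rw [smul_smul, inv_mul_cancel₀ ht.ne', one_smul] at h2
  calc ENNReal.ofReal (t ^ q) * conjFn ρ φ
      ≤ ENNReal.ofReal (t ^ q) * (ENNReal.ofReal (t⁻¹ ^ q) * conjFn ρ (t • φ)) :=
        mul_le_mul_right h2 _
    _ = conjFn ρ (t • φ) := by
        rw [← mul_assoc, ← ENNReal.ofReal_mul (Real.rpow_pos_of_pos ht q).le,
          ← Real.mul_rpow ht.le (inv_pos.2 ht).le, mul_inv_cancel₀ ht.ne',
          Real.one_rpow, ENNReal.ofReal_one, one_mul]

/-! ### The case p = 1: the conjugate takes only the values 0 and ∞ -/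

lemma conj_dichot (ρ : V → ℝ≥0∞) (hhom : PosHomogeneous 1 ρ) (φ : V →L[ℝ] ℝ) :
    conjFn ρ φ = 0 ∨ conjFn ρ φ = ⊤ := by
  by_cases h : ∀ y : V, ENNReal.ofReal (φ y) ≤ ρ y
  · left
    refine le_antisymm (iSup_le fun y => ?_) (zero_le)
    rw [tsub_eq_zero_iff_le.mpr (h y)]
  · right
    push_neg at h
    obtain ⟨y, hy⟩ := h
    have hρy : ρ y ≠ ⊤ := ne_top_of_lt (lt_of_lt_of_le hy le_top)
    set δ : ℝ≥0∞ := ENNReal.ofReal (φ y) - ρ y with hδdef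
    have hδ0 : 0 < δ := by
      rw [hδdef]
      exact tsub_pos_of_lt hy
    have hδt : δ ≠ ⊤ := by
      rw [hδdef]
      exact ne_top_of_le_ne_top ENNReal.ofReal_ne_top (tsub_le_self.trans le_rfl)
    have hδR : 0 < δ.toReal := ENNReal.toReal_pos hδ0.ne' hδt
    apply ENNReal.eq_top_of_forall_nnreal_le
    intro m
    set n : ℝ := (m : ℝ) / δ.toReal + 1 with hndef
    have hn0 : 0 < n := by positivity
    have hterm : ENNReal.ofReal (φ (n • y)) - ρ (n • y) = ENNReal.ofReal n * δ := by
      have h1 : φ (n • y) = n * φ y := by rw [map_smul]; rfl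
      have h2 : ρ (n • y) = ENNReal.ofReal n * ρ y := by
        rw [hhom n hn0.le, Real.rpow_one]
      rw [h1, h2, ENNReal.ofReal_mul hn0.le, hδdef,
        ← ENNReal.mul_sub (fun _ _ => ENNReal.ofReal_ne_top)]
    have hterm_le : ENNReal.ofReal n * δ ≤ conjFn ρ φ := by
      rw [← hterm]
      exact le_iSup (fun w => ENNReal.ofReal (φ w) - ρ w) (n • y)
    calc (m : ℝ≥0∞) ≤ ENNReal.ofReal n * δ := by
          rw [← ENNReal.ofReal_toReal hδt, ← ENNReal.ofReal_mul hn0.le,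
            hndef]
          have : ((m : ℝ) / δ.toReal + 1) * δ.toReal = (m : ℝ) + δ.toReal := by
            field_simp
          rw [this]
          calc (m : ℝ≥0∞) = ENNReal.ofReal (m : ℝ) := (ENNReal.ofReal_coe_nnreal).symm
            _ ≤ ENNReal.ofReal ((m : ℝ) + δ.toReal) :=
                ENNReal.ofReal_le_ofReal (by linarith)
      _ ≤ conjFn ρ φ := hterm_le

/-! ### The Orlicz functional: the case p = 1 -/

lemma orlicz_one (ρ : V → ℝ≥0∞) (hconv : ConvexENNReal ρ) (h0 : ρ 0 = 0)
    (hlsc : LowerSemicontinuous ρ) (hhom : PosHomogeneous 1 ρ) (x : V) (hx : ρ x ≠ ⊤) :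
    ρ x = orlicz ρ x := by
  refine le_antisymm ?_ ?_
  · rw [biconj ρ hconv h0 hlsc x hx]
    refine iSup_le fun φ => ?_
    rcases conj_dichot ρ hhom φ with h | h
    · rw [h, tsub_zero]
      have hcond : conjFn ρ φ ≤ 1 := by rw [h]; exact zero_le_one
      exact le_iSup₂_of_le φ hcond le_rfl
    · rw [h, ENNReal.sub_top]; exact zero_le
  · refine iSup₂_le fun φ hφ => ?_
    have h0' : conjFn ρ φ = 0 := by
      rcases conj_dichot ρ hhom φ with h | h
      · exact h
      · rw [h] at hφ; exact absurd hφ (by simp)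
    have hterm : ENNReal.ofReal (φ x) - ρ x ≤ conjFn ρ φ :=
      le_iSup (fun w => ENNReal.ofReal (φ w) - ρ w) x
    rw [h0'] at hterm
    exact tsub_eq_zero_iff_le.mp (le_antisymm hterm (zero_le))

/-! ### The Orlicz functional: the case p > 1 -/

lemma orlicz_gt (p q : ℝ) (hp : 1 < p) (hpq : p⁻¹ + q⁻¹ = 1) (ρ : V → ℝ≥0∞)
    (hconv : ConvexENNReal ρ) (h0 : ρ 0 = 0) (hlsc : LowerSemicontinuous ρ)
    (hhom : PosHomogeneous p ρ) (x : V) (hx : ρ x ≠ ⊤) :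
    ρ x = ENNReal.ofReal ((q - 1) / q ^ p) * orlicz ρ x ^ p := by
  have hp0 : 0 < p := lt_trans zero_lt_one hp
  have hq0 : 0 < q := aux_q_pos hp hpq
  have hq1 : 1 < q := aux_q_lt hp hpq
  set K : ℝ := (q - 1) / q ^ p with hKdef
  have hK0 : 0 < K := div_pos (by linarith) (Real.rpow_pos_of_pos hq0 p)
  have hKofne : ENNReal.ofReal K ≠ 0 := (ENNReal.ofReal_pos.mpr hK0).ne'
  set A : ℝ≥0∞ := orlicz ρ x with hAdef
  have hbound : ∀ ψ : V →L[ℝ] ℝ, conjFn ρ ψ ≤ 1 → ∀ t : ℝ, 0 < t →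
      t * ψ x - t ^ q ≤ (ρ x).toReal := by
    intro ψ hψ t ht
    have h1 : ENNReal.ofReal ((t • ψ) x) - ρ x ≤ conjFn ρ (t • ψ) :=
      le_iSup (fun w => ENNReal.ofReal ((t • ψ) w) - ρ w) x
    have h2 : conjFn ρ (t • ψ) ≤ ENNReal.ofReal (t ^ q) := by
      calc conjFn ρ (t • ψ) = ENNReal.ofReal (t ^ q) * conjFn ρ ψ :=
            conj_smul_eq hp hpq ρ hhom ψ ht
        _ ≤ ENNReal.ofReal (t ^ q) * 1 := mul_le_mul_right hψ _
        _ = ENNReal.ofReal (t ^ q) := mul_one _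
    have h3 : ENNReal.ofReal (t * ψ x) ≤ ENNReal.ofReal (t ^ q) + ρ x := by
      have h := le_trans h1 h2
      rw [tsub_le_iff_right] at h
      have happ : (t • ψ) x = t * ψ x := rfl
      rwa [happ] at h
    have htq0 : 0 < t ^ q := Real.rpow_pos_of_pos ht q
    have h4 : t * ψ x ≤ t ^ q + (ρ x).toReal := by
      rcases le_or_gt (t * ψ x) 0 with hsign | hsign
      · nlinarith [ENNReal.toReal_nonneg (a := ρ x)]
      · have hne : ENNReal.ofReal (t ^ q) + ρ x ≠ ⊤ :=
          ENNReal.add_ne_top.mpr ⟨ENNReal.ofReal_ne_top, hx⟩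
        rw [ENNReal.ofReal_le_iff_le_toReal hne] at h3
        rwa [ENNReal.toReal_add ENNReal.ofReal_ne_top hx,
          ENNReal.toReal_ofReal htq0.le] at h3
    linarith
  refine le_antisymm ?_ ?_
  · -- ρ x ≤ K · A^p via biconjugation
    rw [biconj ρ hconv h0 hlsc x hx]
    refine iSup_le fun φ => ?_
    rcases eq_or_ne (conjFn ρ φ) ⊤ with hc | hc
    · rw [hc, ENNReal.sub_top]; exact zero_le
    rcases eq_or_ne (conjFn ρ φ) 0 with hc0 | hc0
    · rcases le_or_gt (φ x) 0 with hφx | hφx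
      · rw [hc0, tsub_zero, ENNReal.ofReal_eq_zero.mpr hφx]
        exact zero_le
      · have hAtop : A = ⊤ := by
          apply ENNReal.eq_top_of_forall_nnreal_le
          intro m
          set n : ℝ := ((m : ℝ) + 1) / φ x with hndef
          have hm0 : (0 : ℝ) ≤ (m : ℝ) := m.coe_nonneg
          have hn0 : 0 < n := by positivity
          have hcond : conjFn ρ (n • φ) ≤ 1 := by
            rw [conj_smul_eq hp hpq ρ hhom φ hn0, hc0, mul_zero]
            exact zero_le_one
          have hle : ENNReal.ofReal ((n • φ) x) ≤ A := le_iSup₂_of_le (n • φ) hcond le_rfl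
          have happ : (n • φ) x = (m : ℝ) + 1 := by
            show n * φ x = _
            rw [hndef]
            field_simp
          calc (m : ℝ≥0∞) = ENNReal.ofReal (m : ℝ) := ENNReal.ofReal_coe_nnreal.symm
            _ ≤ ENNReal.ofReal ((m : ℝ) + 1) := ENNReal.ofReal_le_ofReal (by linarith)
            _ = ENNReal.ofReal ((n • φ) x) := by rw [happ]
            _ ≤ A := hle
        rw [hAtop, ENNReal.top_rpow_of_pos hp0, ENNReal.mul_top hKofne]
        exact le_top
    · set cR : ℝ := (conjFn ρ φ).toReal with hcRdef
      have hcR0 : 0 < cR := ENNReal.toReal_pos hc0 hc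
      set t : ℝ := cR ^ q⁻¹ with htdef
      have ht0 : 0 < t := Real.rpow_pos_of_pos hcR0 _
      have htq : t ^ q = cR := by
        rw [htdef, ← Real.rpow_mul hcR0.le, inv_mul_cancel₀ hq0.ne', Real.rpow_one]
      set ψ : V →L[ℝ] ℝ := t⁻¹ • φ with hψdef
      have hψcond : conjFn ρ ψ ≤ 1 := by
        rw [hψdef, conj_smul_eq hp hpq ρ hhom φ (inv_pos.2 ht0), Real.inv_rpow ht0.le, htq,
          ENNReal.ofReal_inv_of_pos hcR0, hcRdef, ENNReal.ofReal_toReal hc,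
          ENNReal.inv_mul_cancel hc0 hc]
      have hψA : ENNReal.ofReal (ψ x) ≤ A := le_iSup₂_of_le ψ hψcond le_rfl
      rcases eq_or_ne A ⊤ with hA | hA
      · rw [hA, ENNReal.top_rpow_of_pos hp0, ENNReal.mul_top hKofne]
        exact le_top
      · set a : ℝ := A.toReal with hadef
        have ha0 : 0 ≤ a := ENNReal.toReal_nonneg
        have hψxa : ψ x ≤ a := by
          rcases le_or_gt (ψ x) 0 with h | h
          · linarith
          · exact (ENNReal.ofReal_le_iff_le_toReal hA).mp hψA
        have hφψ : φ x = t * ψ x := by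
          have : ψ x = t⁻¹ * φ x := rfl
          rw [this, ← mul_assoc, mul_inv_cancel₀ ht0.ne', one_mul]
        have hc_eq : conjFn ρ φ = ENNReal.ofReal (t ^ q) := by
          rw [htq, hcRdef, ENNReal.ofReal_toReal hc]
        have hstep : ENNReal.ofReal (φ x) - conjFn ρ φ ≤ ENNReal.ofReal (t * a - t ^ q) := by
          rw [hc_eq, ENNReal.ofReal_sub _ (Real.rpow_pos_of_pos ht0 q).le]
          have hmono : φ x - t ^ q ≤ t * a - t ^ q := by
            rw [hφψ]
            nlinarith
          exact tsub_le_tsub_right (ENNReal.ofReal_le_ofReal (by nlinarith)) _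
        calc ENNReal.ofReal (φ x) - conjFn ρ φ ≤ ENNReal.ofReal (t * a - t ^ q) := hstep
          _ ≤ ENNReal.ofReal (K * a ^ p) :=
              ENNReal.ofReal_le_ofReal (aux_young hp hpq ha0 ht0.le)
          _ = ENNReal.ofReal K * A ^ p := by
              rw [ENNReal.ofReal_mul hK0.le]
              congr 1
              rw [show A = ENNReal.ofReal a from (ENNReal.ofReal_toReal hA).symm,
                ENNReal.ofReal_rpow_of_nonneg ha0 hp0.le]
  · -- K · A^p ≤ ρ x
    set B : ℝ := ((ρ x).toReal / K) ^ p⁻¹ with hBdef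
    have hBnn : 0 ≤ B := Real.rpow_nonneg (div_nonneg ENNReal.toReal_nonneg hK0.le) _
    have hAB : A ≤ ENNReal.ofReal B := by
      refine iSup₂_le fun ψ hψ => ?_
      rcases le_or_gt (ψ x) 0 with h | h
      · rw [ENNReal.ofReal_eq_zero.mpr h]
        exact zero_le
      · obtain ⟨t, ht0, hteq⟩ := aux_young_opt hp hpq h
        have hb := hbound ψ hψ t ht0
        rw [hteq] at hb
        have h1 : (ψ x) ^ p ≤ (ρ x).toReal / K := by
          rw [le_div_iff₀ hK0]
          nlinarith
        have hψB : ψ x ≤ B := by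
          calc ψ x = ((ψ x) ^ p) ^ p⁻¹ := by
                rw [← Real.rpow_mul h.le, mul_inv_cancel₀ hp0.ne', Real.rpow_one]
            _ ≤ ((ρ x).toReal / K) ^ p⁻¹ :=
                Real.rpow_le_rpow (Real.rpow_nonneg h.le _) h1 (inv_nonneg.2 hp0.le)
            _ = B := rfl
        exact ENNReal.ofReal_le_ofReal hψB
    have hBp : B ^ p = (ρ x).toReal / K := by
      rw [hBdef, ← Real.rpow_mul (div_nonneg ENNReal.toReal_nonneg hK0.le),
        inv_mul_cancel₀ hp0.ne', Real.rpow_one]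
    have hfin : ENNReal.ofReal K * (ENNReal.ofReal B) ^ p ≤ ρ x := by
      rw [ENNReal.ofReal_rpow_of_nonneg hBnn hp0.le, ← ENNReal.ofReal_mul hK0.le, hBp,
        mul_div_cancel₀ _ hK0.ne', ENNReal.ofReal_toReal hx]
    calc ENNReal.ofReal K * A ^ p ≤ ENNReal.ofReal K * (ENNReal.ofReal B) ^ p :=
          mul_le_mul_right (ENNReal.rpow_le_rpow hAB hp0.le) _
      _ ≤ ρ x := hfin

/-- **The homogeneous case, part (c)** (Proposition 2.6 (c)). -/
theorem homogeneous_luxemburg_orlicz (p q : ℝ) (hp : 1 ≤ p)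
    (hq : 1 < p → p⁻¹ + q⁻¹ = 1) (ρ : V → ℝ≥0∞)
    (hconv : ConvexENNReal ρ) (h0 : ρ 0 = 0) (hlsc : LowerSemicontinuous ρ)
    (hhom : PosHomogeneous p ρ) :
    ∀ x : V, ρ x ≠ ⊤ →
      (1 < p → luxemburg ρ x ^ p = ρ x ∧
        ρ x = ENNReal.ofReal ((q - 1) / q ^ p) * orlicz ρ x ^ p) ∧
      (p = 1 → luxemburg ρ x = ρ x ∧ ρ x = orlicz ρ x) := by
  intro x hx
  refine ⟨fun hp1 => ?_, fun hp1 => ?_⟩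
  · exact ⟨lux_rpow (lt_trans zero_lt_one hp1) ρ hhom x hx,
      orlicz_gt p q hp1 (hq hp1) ρ hconv h0 hlsc hhom x hx⟩
  · subst hp1
    refine ⟨?_, orlicz_one ρ hconv h0 hlsc hhom x hx⟩
    have h := lux_rpow one_pos ρ hhom x hx
    rwa [ENNReal.rpow_one] at h
end
end

section
/- Let X be a nonempty set, o ∈ X, and let E : F(X) → [0,∞] be convex and symmetric with E(0) = 0, such that the elementary resistance R(x,y) is finite for all x, y ∈ X. Then the kernel of the Luxemburg seminorm on M(E) is contained in ℝ·1 (the constant functions), the expression ‖f‖_L + |f(o)| is a norm on M(E), and the locally convex topology on M(E) generated by ‖·‖_L together with all evaluation seminorms f ↦ |f(x)|, x ∈ X, is generated by this single norm ‖·‖_L + |δ_o|. In particular, for any two points o, o' ∈ X the norms ‖·‖_L + |δ_o| and ‖·‖_L + |δ_{o'}| on M(E) are equivalent. -/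
open scoped ENNReal NNReal

noncomputable section

/-- The elementary resistance `R(x,y) = sup {f x − f y : E f ≤ 1}`. -/
noncomputable def eRes {X : Type*} (E : (X → ℝ) → ℝ≥0∞) (x y : X) : ℝ≥0∞ :=
  ⨆ (f : X → ℝ) (_ : E f ≤ 1), ENNReal.ofReal (f x - f y)

/-- The elementary resistance between `x` and `∞`: `R_∞(x) = sup {f x : E f ≤ 1}`. -/
noncomputable def eResInf {X : Type*} (E : (X → ℝ) → ℝ≥0∞) (x : X) : ℝ≥0∞ :=
  ⨆ (f : X → ℝ) (_ : E f ≤ 1), ENNReal.ofReal (f x)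

section helpers
variable {X : Type*} {E : (X → ℝ) → ℝ≥0∞}

lemma lux_le {f : X → ℝ} {lam : ℝ} (hl : 0 < lam) (hE : E (lam⁻¹ • f) ≤ 1) :
    luxemburg E f ≤ ENNReal.ofReal lam :=
  iInf_le_of_le lam (iInf_le_of_le hl (iInf_le_of_le hE le_rfl))

lemma lux_lt_iff {f : X → ℝ} {b : ℝ≥0∞} (hb : luxemburg E f < b) :
    ∃ lam : ℝ, 0 < lam ∧ E (lam⁻¹ • f) ≤ 1 ∧ ENNReal.ofReal lam < b := by
  obtain ⟨lam, h1, h2, h3⟩ := by simpa [luxemburg, iInf_lt_iff] using hb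
  exact ⟨lam, h2, h1, h3⟩

lemma E_smul_le (hconv : ConvexENNReal E) (h0 : E 0 = 0) {y : X → ℝ} {t : ℝ}
    (ht0 : 0 ≤ t) (ht1 : t ≤ 1) : E (t • y) ≤ ENNReal.ofReal t * E y := by
  have := hconv y 0 t (1 - t) ht0 (by linarith) (by ring)
  simpa [h0] using this

lemma exists_admissible (hconv : ConvexENNReal E) (h0 : E 0 = 0) {f : X → ℝ}
    (hf : f ∈ modularCone E) : ∃ lam : ℝ, 0 < lam ∧ E (lam⁻¹ • f) ≤ 1 := by
  obtain ⟨t, y, ht, hy, rfl⟩ := hf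
  rcases eq_or_lt_of_le ht with h | h
  · exact ⟨(1:ℝ), one_pos, by simp [← h, h0]⟩
  · set r := (E y).toReal with hr'
    have hr : 0 ≤ r := ENNReal.toReal_nonneg
    set μ := min 1 (1 / (r + 1)) with hμ
    have hμ0 : 0 < μ := lt_min one_pos (by positivity)
    have hμ1 : μ ≤ 1 := min_le_left _ _
    refine ⟨t / μ, by positivity, ?_⟩
    have h1 : (t / μ)⁻¹ • (t • y) = μ • y := by
      rw [smul_smul]
      congr 1
      field_simp
    rw [h1]
    calc E (μ • y) ≤ ENNReal.ofReal μ * E y := E_smul_le hconv h0 hμ0.le hμ1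
      _ ≤ 1 := by
        rw [← ENNReal.ofReal_toReal hy, ← hr', ← ENNReal.ofReal_mul hμ0.le]
        refine ENNReal.ofReal_le_one.mpr ?_
        have h2 : μ ≤ 1 / (r + 1) := min_le_right _ _
        have h3 : μ * r ≤ (1 / (r + 1)) * r := by nlinarith
        calc μ * r ≤ (1 / (r + 1)) * r := h3
          _ ≤ 1 := by
            rw [div_mul_eq_mul_div, one_mul, div_le_one (by linarith)]
            linarith

lemma lux_lt_top (hconv : ConvexENNReal E) (h0 : E 0 = 0) {f : X → ℝ}
    (hf : f ∈ modularCone E) : luxemburg E f ≠ ⊤ := by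
  obtain ⟨lam, hl, hE⟩ := exists_admissible hconv h0 hf
  exact ((lux_le hl hE).trans_lt ENNReal.ofReal_lt_top).ne

lemma lux_zero (h0 : E 0 = 0) : luxemburg E (0 : X → ℝ) = 0 := by
  refine le_antisymm ?_ zero_le
  refine ENNReal.le_of_forall_pos_le_add fun ε hε _ => ?_
  have : luxemburg E (0 : X → ℝ) ≤ ENNReal.ofReal ε := by
    refine lux_le (by exact_mod_cast hε) ?_
    simp [h0]
  simpa [ENNReal.ofReal_coe_nnreal] using this

lemma sub_le_of_admissible (hsym : ∀ f : X → ℝ, E (-f) = E f) {f : X → ℝ} {lam : ℝ}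
    (hl : 0 < lam) (hE : E (lam⁻¹ • f) ≤ 1) (x y : X) (hfin : eRes E x y ≠ ⊤) :
    |f x - f y| ≤ lam * (eRes E x y).toReal := by
  set g := lam⁻¹ • f with hg'
  have key : ∀ h : X → ℝ, E h ≤ 1 → h x - h y ≤ (eRes E x y).toReal := by
    intro h hh
    have h1 : ENNReal.ofReal (h x - h y) ≤ eRes E x y := le_iSup₂ (f := fun h _ => ENNReal.ofReal (h x - h y)) h hh
    rcases le_or_gt (h x - h y) 0 with h2 | h2
    · exact h2.trans ENNReal.toReal_nonneg
    · have h3 := ENNReal.toReal_mono hfin h1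
      simpa [ENNReal.toReal_ofReal h2.le] using h3
  have hg : E g ≤ 1 := hE
  have hg2 : E (-g) ≤ 1 := by rw [hsym]; exact hE
  have h1 := key g hg
  have h2 := key (-g) hg2
  simp only [Pi.neg_apply] at h2
  have habs : |g x - g y| ≤ (eRes E x y).toReal := abs_le.mpr ⟨by linarith, h1⟩
  have hfxy : f x - f y = lam * (g x - g y) := by
    simp only [hg', Pi.smul_apply, smul_eq_mul]
    field_simp
  rw [hfxy, abs_mul, abs_of_pos hl]
  exact mul_le_mul_of_nonneg_left habs hl.le

lemma abs_sub_le_lux (hconv : ConvexENNReal E) (h0 : E 0 = 0)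
    (hsym : ∀ f : X → ℝ, E (-f) = E f) {f : X → ℝ} (hf : f ∈ modularCone E)
    (x y : X) (hfin : eRes E x y ≠ ⊤) :
    |f x - f y| ≤ (luxemburg E f).toReal * (eRes E x y).toReal := by
  set L := luxemburg E f with hL'
  have hLtop : L ≠ ⊤ := lux_lt_top hconv h0 hf
  set R := (eRes E x y).toReal with hR'
  have hR : 0 ≤ R := ENNReal.toReal_nonneg
  refine le_of_forall_pos_le_add fun δ hδ => ?_
  set ε := δ / (R + 1) with hε'
  have hε : 0 < ε := by positivity
  have hlt : L < ENNReal.ofReal (L.toReal + ε) := by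
    conv_lhs => rw [← ENNReal.ofReal_toReal hLtop]
    exact (ENNReal.ofReal_lt_ofReal_iff (by positivity)).mpr (by linarith)
  obtain ⟨lam, hl, hEl, hltl⟩ := lux_lt_iff hlt
  have hlam : lam < L.toReal + ε := (ENNReal.ofReal_lt_ofReal_iff (by positivity)).mp hltl
  have h1 := sub_le_of_admissible hsym hl hEl x y hfin
  have hεR : ε * (R + 1) = δ := div_mul_cancel₀ _ (by positivity)
  calc |f x - f y| ≤ lam * R := h1
    _ ≤ (L.toReal + ε) * R := mul_le_mul_of_nonneg_right hlam.le hR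
    _ ≤ L.toReal * R + δ := by nlinarith

lemma lux_add_le (hconv : ConvexENNReal E) (h0 : E 0 = 0) {f g : X → ℝ}
    (hf : f ∈ modularCone E) (hg : g ∈ modularCone E) :
    luxemburg E (f + g) ≤ luxemburg E f + luxemburg E g := by
  have hLf : luxemburg E f ≠ ⊤ := lux_lt_top hconv h0 hf
  have hLg : luxemburg E g ≠ ⊤ := lux_lt_top hconv h0 hg
  refine ENNReal.le_of_forall_pos_le_add fun ε hε _ => ?_
  have hε2 : ((ε / 2 : ℝ≥0) : ℝ≥0∞) ≠ 0 := by
    simp [ne_eq, ENNReal.coe_eq_zero]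
    positivity
  obtain ⟨lam, hl, hEl, hltl⟩ := lux_lt_iff (ENNReal.lt_add_right hLf hε2)
  obtain ⟨mu, hm, hEm, hltm⟩ := lux_lt_iff (ENNReal.lt_add_right hLg hε2)
  have hlm : 0 < lam + mu := by linarith
  have hadm : E ((lam + mu)⁻¹ • (f + g)) ≤ 1 := by
    have key := hconv (lam⁻¹ • f) (mu⁻¹ • g) (lam / (lam + mu)) (mu / (lam + mu))
      (by positivity) (by positivity) (by field_simp)
    have heq : (lam / (lam + mu)) • (lam⁻¹ • f) + (mu / (lam + mu)) • (mu⁻¹ • g)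
        = (lam + mu)⁻¹ • (f + g) := by
      rw [smul_smul, smul_smul, smul_add]
      congr 1 <;> congr 1 <;> field_simp <;> ring
    rw [heq] at key
    calc E ((lam + mu)⁻¹ • (f + g))
        ≤ ENNReal.ofReal (lam / (lam + mu)) * E (lam⁻¹ • f)
          + ENNReal.ofReal (mu / (lam + mu)) * E (mu⁻¹ • g) := key
      _ ≤ ENNReal.ofReal (lam / (lam + mu)) * 1 + ENNReal.ofReal (mu / (lam + mu)) * 1 := by
          gcongr
      _ = ENNReal.ofReal (lam / (lam + mu) + mu / (lam + mu)) := by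
          rw [mul_one, mul_one, ENNReal.ofReal_add (by positivity) (by positivity)]
      _ = 1 := by rw [← add_div, div_self hlm.ne', ENNReal.ofReal_one]
  calc luxemburg E (f + g) ≤ ENNReal.ofReal (lam + mu) := lux_le hlm hadm
    _ = ENNReal.ofReal lam + ENNReal.ofReal mu := ENNReal.ofReal_add hl.le hm.le
    _ ≤ (luxemburg E f + (ε / 2 : ℝ≥0)) + (luxemburg E g + (ε / 2 : ℝ≥0)) :=
        add_le_add hltl.le hltm.le
    _ = luxemburg E f + luxemburg E g + ε := by
        rw [add_add_add_comm, ← ENNReal.coe_add]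
        congr 2
        exact add_halves ε

lemma lux_smul_le (hsym : ∀ f : X → ℝ, E (-f) = E f) {f : X → ℝ} {c : ℝ} (hc : c ≠ 0) :
    luxemburg E (c • f) ≤ ENNReal.ofReal |c| * luxemburg E f := by
  have hcpos : 0 < |c| := abs_pos.mpr hc
  have key : ENNReal.ofReal |c|⁻¹ * luxemburg E (c • f) ≤ luxemburg E f := by
    refine le_iInf fun lam => le_iInf fun hl => le_iInf fun hE => ?_
    have hadm : E ((|c| * lam)⁻¹ • (c • f)) ≤ 1 := by
      have heq : (|c| * lam)⁻¹ • (c • f) = (c / |c|) • (lam⁻¹ • f) := by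
        rw [smul_smul, smul_smul]
        congr 1
        field_simp
      rw [heq]
      rcases abs_choice c with h | h
      · rw [h, div_self hc, one_smul]; exact hE
      · rw [h, div_neg, div_self hc]
        have : (-(1:ℝ)) • (lam⁻¹ • f) = -(lam⁻¹ • f) := by simp
        rw [this, hsym]
        exact hE
    have h1 : luxemburg E (c • f) ≤ ENNReal.ofReal (|c| * lam) :=
      lux_le (mul_pos hcpos hl) hadm
    calc ENNReal.ofReal |c|⁻¹ * luxemburg E (c • f)
        ≤ ENNReal.ofReal |c|⁻¹ * ENNReal.ofReal (|c| * lam) := by gcongr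
      _ = ENNReal.ofReal lam := by
          rw [← ENNReal.ofReal_mul (by positivity)]
          congr 1
          field_simp
  calc luxemburg E (c • f)
      = (ENNReal.ofReal |c| * ENNReal.ofReal |c|⁻¹) * luxemburg E (c • f) := by
        rw [← ENNReal.ofReal_mul (abs_nonneg c), mul_inv_cancel₀ hcpos.ne',
          ENNReal.ofReal_one, one_mul]
    _ = ENNReal.ofReal |c| * (ENNReal.ofReal |c|⁻¹ * luxemburg E (c • f)) := by ring
    _ ≤ ENNReal.ofReal |c| * luxemburg E f := by gcongr

lemma lux_smul (hsym : ∀ f : X → ℝ, E (-f) = E f) {f : X → ℝ} {c : ℝ} (hc : c ≠ 0) :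
    luxemburg E (c • f) = ENNReal.ofReal |c| * luxemburg E f := by
  have hcpos : 0 < |c| := abs_pos.mpr hc
  refine le_antisymm (lux_smul_le hsym hc) ?_
  have h2 : luxemburg E f ≤ ENNReal.ofReal |c|⁻¹ * luxemburg E (c • f) := by
    have h3 := lux_smul_le (E := E) hsym (f := c • f) (c := c⁻¹) (inv_ne_zero hc)
    rw [inv_smul_smul₀ hc] at h3
    simpa [abs_inv] using h3
  calc ENNReal.ofReal |c| * luxemburg E f
      ≤ ENNReal.ofReal |c| * (ENNReal.ofReal |c|⁻¹ * luxemburg E (c • f)) := by gcongr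
    _ = luxemburg E (c • f) := by
        rw [← mul_assoc, ← ENNReal.ofReal_mul (abs_nonneg c), mul_inv_cancel₀ hcpos.ne',
          ENNReal.ofReal_one, one_mul]
end helpers

/-- **Kernel and metrizability of the form topology** (Corollaries 3.6, 3.8):
if the elementary resistance is finite, then the kernel of the Luxemburg seminorm consists of
constants, `‖·‖_L + |·(o)|` is a norm on `M(E)` which dominates every evaluation seminorm
(so it generates the topology `𝔓_E`), and the norms obtained from different base points are
equivalent. -/
theorem luxemburg_kernel_and_norm {X : Type*} [Nonempty X] (E : (X → ℝ) → ℝ≥0∞) (o : X)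
    (hconv : ConvexENNReal E) (h0 : E 0 = 0) (hsym : ∀ f : X → ℝ, E (-f) = E f)
    (hfin : ∀ x y : X, eRes E x y ≠ ⊤) :
    (∀ f ∈ modularCone E, luxemburg E f = 0 → ∃ c : ℝ, f = fun _ => c) ∧
    (∀ f ∈ modularCone E,
      (luxemburg E f + ENNReal.ofReal |f o| = 0 ↔ f = 0)) ∧
    (∀ f ∈ modularCone E, ∀ g ∈ modularCone E,
      luxemburg E (f + g) + ENNReal.ofReal |(f + g) o| ≤
        (luxemburg E f + ENNReal.ofReal |f o|) + (luxemburg E g + ENNReal.ofReal |g o|)) ∧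
    (∀ (c : ℝ), ∀ f ∈ modularCone E,
      luxemburg E (c • f) + ENNReal.ofReal |(c • f) o| =
        ENNReal.ofReal |c| * (luxemburg E f + ENNReal.ofReal |f o|)) ∧
    (∀ x : X, ∃ C : ℝ≥0, ∀ f ∈ modularCone E,
      ENNReal.ofReal |f x| ≤ (C : ℝ≥0∞) * (luxemburg E f + ENNReal.ofReal |f o|)) ∧
    (∀ o' : X, ∃ C : ℝ≥0, ∀ f ∈ modularCone E,
      luxemburg E f + ENNReal.ofReal |f o'| ≤
        (C : ℝ≥0∞) * (luxemburg E f + ENNReal.ofReal |f o|)) := by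
  have hker : ∀ f ∈ modularCone E, luxemburg E f = 0 → ∃ c : ℝ, f = fun _ => c := by
    intro f hf hlux
    refine ⟨f o, funext fun x => ?_⟩
    have h1 := abs_sub_le_lux hconv h0 hsym hf x o (hfin x o)
    rw [hlux] at h1
    have h2 : |f x - f o| ≤ 0 := by simpa using h1
    exact sub_eq_zero.mp (abs_nonpos_iff.mp h2)
  have heval : ∀ x : X, ∃ C : ℝ≥0, ∀ f ∈ modularCone E,
      ENNReal.ofReal |f x| ≤ (C : ℝ≥0∞) * (luxemburg E f + ENNReal.ofReal |f o|) := by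
    intro x
    set R := (eRes E x o).toReal with hR'
    have hR : 0 ≤ R := ENNReal.toReal_nonneg
    refine ⟨Real.toNNReal (R + 1), fun f hf => ?_⟩
    have hLtop := lux_lt_top hconv h0 hf
    set L := luxemburg E f with hL'
    have h1 : |f x - f o| ≤ L.toReal * R := abs_sub_le_lux hconv h0 hsym hf x o (hfin x o)
    have h2 : |f x| ≤ (R + 1) * (L.toReal + |f o|) := by
      have h3 : |f x| ≤ |f x - f o| + |f o| := by
        calc |f x| = |(f x - f o) + f o| := by ring_nf
          _ ≤ _ := abs_add_le _ _
      have hLt : (0:ℝ) ≤ L.toReal := ENNReal.toReal_nonneg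
      have hfo : (0:ℝ) ≤ |f o| := abs_nonneg _
      nlinarith
    calc ENNReal.ofReal |f x| ≤ ENNReal.ofReal ((R + 1) * (L.toReal + |f o|)) :=
        ENNReal.ofReal_le_ofReal h2
      _ = ENNReal.ofReal (R + 1) * ENNReal.ofReal (L.toReal + |f o|) :=
        ENNReal.ofReal_mul (by positivity)
      _ = (Real.toNNReal (R + 1) : ℝ≥0∞) * (L + ENNReal.ofReal |f o|) := by
        rw [ENNReal.ofReal_add ENNReal.toReal_nonneg (abs_nonneg _),
          ENNReal.ofReal_toReal hLtop]
        rfl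
  refine ⟨hker, ?_, ?_, ?_, heval, ?_⟩
  · intro f hf
    constructor
    · intro h
      obtain ⟨h1, h2⟩ := add_eq_zero.mp h
      obtain ⟨c, rfl⟩ := hker f hf h1
      have hc : c = 0 := by
        have h3 : |c| ≤ 0 := by simpa using ENNReal.ofReal_eq_zero.mp h2
        exact abs_nonpos_iff.mp h3
      subst hc
      rfl
    · rintro rfl
      simp [lux_zero h0]
  · intro f hf g hg
    have h1 := lux_add_le hconv h0 hf hg
    have h2 : ENNReal.ofReal |(f + g) o| ≤ ENNReal.ofReal |f o| + ENNReal.ofReal |g o| := by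
      rw [← ENNReal.ofReal_add (abs_nonneg _) (abs_nonneg _)]
      exact ENNReal.ofReal_le_ofReal (by simpa using abs_add_le (f o) (g o))
    calc luxemburg E (f + g) + ENNReal.ofReal |(f + g) o|
        ≤ (luxemburg E f + luxemburg E g) + (ENNReal.ofReal |f o| + ENNReal.ofReal |g o|) :=
          add_le_add h1 h2
      _ = _ := by ring
  · intro c f hf
    rcases eq_or_ne c 0 with rfl | hc
    · simp [lux_zero h0]
    · rw [lux_smul hsym hc]
      have h1 : |(c • f) o| = |c| * |f o| := by simp [abs_mul]
      rw [h1, ENNReal.ofReal_mul (abs_nonneg c), mul_add]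
  · intro o'
    obtain ⟨C, hC⟩ := heval o'
    refine ⟨C + 1, fun f hf => ?_⟩
    have h1 := hC f hf
    calc luxemburg E f + ENNReal.ofReal |f o'|
        ≤ (luxemburg E f + ENNReal.ofReal |f o|)
          + (C : ℝ≥0∞) * (luxemburg E f + ENNReal.ofReal |f o|) :=
          add_le_add (le_add_right le_rfl) h1
      _ = ((C + 1 : ℝ≥0) : ℝ≥0∞) * (luxemburg E f + ENNReal.ofReal |f o|) := by
          push_cast
          ring
end
end

section
/- Let X be a nonempty set and let E : F(X) → [0,∞] be convex, symmetric and reflexive with E(0) = 0. Assume that the kernel of the Luxemburg seminorm ‖·‖_L on M(E) equals ℝ·1 (the constant functions) and that R(x,y) < ∞ for all x, y ∈ X. Then the following are equivalent: (i) E is (sequentially) lower semicontinuous with respect to pointwise convergence on F(X); (ii) the quotient normed space (M(E)/ℝ·1, ‖·‖_L) is a Banach space and E is left-continuous. -/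
open scoped ENNReal NNReal

noncomputable section

/-- `ρ` is left-continuous: `ρ (λ • x) → ρ x` as `λ → 1−`. -/
def LeftContinuousFunctional {W : Type*} [AddCommGroup W] [Module ℝ W] (ρ : W → ℝ≥0∞) : Prop :=
  ∀ x : W, Filter.Tendsto (fun lam : ℝ => ρ (lam • x))
    (nhdsWithin (1 : ℝ) (Set.Iio 1)) (nhds (ρ x))

/-- A witness that the seminormed space `(M(ρ), ‖·‖_L)` is reflexive, i.e. that the natural
isometric embedding into its bidual has dense image.  Equivalently, there is a reflexive
Banach space `B` (the bidual, a Banach space in which the canonical image of `M(ρ)` is dense)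
together with a linear map `T` on `M(ρ)` which is isometric with respect to the Luxemburg
seminorm and has dense range. -/
structure ReflexiveWitness {W : Type*} [AddCommGroup W] [Module ℝ W] (ρ : W → ℝ≥0∞) where
  B : Type*
  [normedInst : NormedAddCommGroup B]
  [nspaceInst : NormedSpace ℝ B]
  [completeInst : CompleteSpace B]
  reflexiveB : Function.Surjective (NormedSpace.inclusionInDoubleDual ℝ B)
  T : W → B
  map_add : ∀ f ∈ modularCone ρ, ∀ g ∈ modularCone ρ, T (f + g) = T f + T g
  map_smul : ∀ (c : ℝ), ∀ f ∈ modularCone ρ, T (c • f) = c • T f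
  isometric : ∀ f ∈ modularCone ρ, ENNReal.ofReal ‖T f‖ = luxemburg ρ f
  denseImage : DenseRange fun f : modularCone ρ => T f.1

/-- `ρ` is reflexive: the natural isometric embedding of `(M(ρ), ‖·‖_L)` into its bidual has
dense image. -/
def ReflexiveForm.{u, v} {W : Type u} [AddCommGroup W] [Module ℝ W] (ρ : W → ℝ≥0∞) : Prop :=
  Nonempty (ReflexiveWitness.{u, v} ρ)

/-- Sequential lower semicontinuity with respect to pointwise convergence. -/
def SeqLowerSemicontinuous {X : Type*} (E : (X → ℝ) → ℝ≥0∞) : Prop :=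
  ∀ (f : ℕ → X → ℝ) (g : X → ℝ),
    (∀ x : X, Filter.Tendsto (fun n => f n x) Filter.atTop (nhds (g x))) →
    E g ≤ Filter.liminf (fun n => E (f n)) Filter.atTop


section Aux

open Filter ENNReal

variable {X : Type*} {E : (X → ℝ) → ℝ≥0∞}

lemma lux_le_of_mem {f : X → ℝ} {lam : ℝ} (hl : 0 < lam) (h : E (lam⁻¹ • f) ≤ 1) :
    luxemburg E f ≤ ENNReal.ofReal lam :=
  iInf_le_of_le lam (iInf_le_of_le hl (iInf_le_of_le h le_rfl))

variable (hconv : ConvexENNReal E) (h0 : E 0 = 0)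

include hconv h0 in
lemma E_smul_le_s9 (f : X → ℝ) {a : ℝ} (ha : 0 ≤ a) (ha1 : a ≤ 1) :
    E (a • f) ≤ ENNReal.ofReal a * E f := by
  have h := hconv f 0 a (1 - a) ha (by linarith) (by ring)
  simpa [h0] using h

include hconv h0 in
lemma E_mono_ray (f : X → ℝ) {a b : ℝ} (ha : 0 ≤ a) (hab : a ≤ b) :
    E (a • f) ≤ E (b • f) := by
  rcases eq_or_lt_of_le (ha.trans hab) with hb | hb
  · obtain rfl : a = b := le_antisymm hab (hb ▸ ha)
    exact le_rfl
  · have h1 : a • f = (a / b) • (b • f) := by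
      rw [smul_smul]; congr 1; field_simp
    rw [h1]
    calc E ((a / b) • (b • f)) ≤ ENNReal.ofReal (a / b) * E (b • f) :=
          E_smul_le_s9 hconv h0 _ (div_nonneg ha hb.le) (div_le_one_of_le₀ hab hb.le)
      _ ≤ 1 * E (b • f) := by
          gcongr
          exact ENNReal.ofReal_le_one.mpr (div_le_one_of_le₀ hab hb.le)
      _ = E (b • f) := one_mul _

include hconv h0 in
lemma E_le_one_of_lux_lt {f : X → ℝ} {lam : ℝ} (hl : 0 < lam)
    (h : luxemburg E f < ENNReal.ofReal lam) : E (lam⁻¹ • f) ≤ 1 := by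
  simp only [luxemburg, iInf_lt_iff] at h
  obtain ⟨mu, hmu, hEmu, hlt⟩ := h
  have hmul : mu < lam := (ENNReal.ofReal_lt_ofReal_iff hl).mp hlt
  have : lam⁻¹ • f = (mu / lam) • (mu⁻¹ • f) := by
    rw [smul_smul]; congr 1; field_simp
  rw [this]
  calc E ((mu / lam) • (mu⁻¹ • f)) ≤ ENNReal.ofReal (mu / lam) * E (mu⁻¹ • f) :=
        E_smul_le_s9 hconv h0 _ (div_nonneg hmu.le hl.le) (div_le_one_of_le₀ hmul.le hl.le)
    _ ≤ 1 * 1 := by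
        have h1 := ENNReal.ofReal_le_one.mpr (div_le_one_of_le₀ hmul.le hl.le)
        gcongr
    _ = 1 := one_mul _

include hconv h0 in
lemma lux_triangle (f g : X → ℝ) :
    luxemburg E (f + g) ≤ luxemburg E f + luxemburg E g := by
  refine ENNReal.le_of_forall_pos_le_add fun ε hε hfin => ?_
  have hf : luxemburg E f ≠ ⊤ := (lt_of_le_of_lt le_self_add hfin).ne
  have hg : luxemburg E g ≠ ⊤ := (lt_of_le_of_lt le_add_self hfin).ne
  have hε2 : (0 : ℝ≥0∞) < ENNReal.ofReal (ε / 2) := by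
    rw [ENNReal.ofReal_pos]; positivity
  have hflt : luxemburg E f < luxemburg E f + ENNReal.ofReal (ε / 2) :=
    ENNReal.lt_add_right hf hε2.ne'
  have hglt : luxemburg E g < luxemburg E g + ENNReal.ofReal (ε / 2) :=
    ENNReal.lt_add_right hg hε2.ne'
  -- extract admissible lambdas
  have hex : ∀ (h : X → ℝ), luxemburg E h < luxemburg E h + ENNReal.ofReal (ε / 2) →
      ∃ lam : ℝ, 0 < lam ∧ E (lam⁻¹ • h) ≤ 1 ∧
        ENNReal.ofReal lam ≤ luxemburg E h + ENNReal.ofReal (ε / 2) := by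
    intro h hlt
    have := hlt
    conv_lhs at this => rw [luxemburg]
    simp only [iInf_lt_iff] at this
    obtain ⟨lam, h1, h2, h3⟩ := this
    exact ⟨lam, h1, h2, h3.le⟩
  obtain ⟨l1, hl1, hE1, hle1⟩ := hex f hflt
  obtain ⟨l2, hl2, hE2, hle2⟩ := hex g hglt
  have hs : 0 < l1 + l2 := by linarith
  have hEs : E ((l1 + l2)⁻¹ • (f + g)) ≤ 1 := by
    have hdecomp : (l1 + l2)⁻¹ • (f + g)
        = (l1 / (l1 + l2)) • (l1⁻¹ • f) + (l2 / (l1 + l2)) • (l2⁻¹ • g) := by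
      have h1 : l1 ≠ 0 := hl1.ne'
      have h2 : l2 ≠ 0 := hl2.ne'
      have hs' : l1 + l2 ≠ 0 := hs.ne'
      have e1 : (l1 + l2)⁻¹ = l1 / (l1 + l2) * l1⁻¹ := by field_simp
      have e2 : (l1 + l2)⁻¹ = l2 / (l1 + l2) * l2⁻¹ := by field_simp
      rw [smul_add, smul_smul, smul_smul, ← e1, ← e2]
    rw [hdecomp]
    calc E _ ≤ ENNReal.ofReal (l1 / (l1 + l2)) * E (l1⁻¹ • f)
          + ENNReal.ofReal (l2 / (l1 + l2)) * E (l2⁻¹ • g) :=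
          hconv _ _ _ _ (by positivity) (by positivity) (by field_simp)
      _ ≤ ENNReal.ofReal (l1 / (l1 + l2)) * 1 + ENNReal.ofReal (l2 / (l1 + l2)) * 1 := by
          gcongr
      _ = ENNReal.ofReal (l1 / (l1 + l2)) + ENNReal.ofReal (l2 / (l1 + l2)) := by
          rw [mul_one, mul_one]
      _ = ENNReal.ofReal (l1 / (l1 + l2) + l2 / (l1 + l2)) :=
          (ENNReal.ofReal_add (by positivity) (by positivity)).symm
      _ = 1 := by rw [← add_div, div_self hs.ne']; simp
  calc luxemburg E (f + g) ≤ ENNReal.ofReal (l1 + l2) := lux_le_of_mem hs hEs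
    _ = ENNReal.ofReal l1 + ENNReal.ofReal l2 := ENNReal.ofReal_add hl1.le hl2.le
    _ ≤ (luxemburg E f + ENNReal.ofReal (ε / 2))
        + (luxemburg E g + ENNReal.ofReal (ε / 2)) := add_le_add hle1 hle2
    _ = luxemburg E f + luxemburg E g + (ENNReal.ofReal (ε / 2) + ENNReal.ofReal (ε / 2)) := by
        ring
    _ ≤ luxemburg E f + luxemburg E g + ε := by
        gcongr
        rw [← ENNReal.ofReal_add (by positivity) (by positivity)]
        calc ENNReal.ofReal (ε / 2 + ε / 2) = ENNReal.ofReal (ε : ℝ) := by norm_num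
          _ ≤ (ε : ℝ≥0∞) := ENNReal.ofReal_coe_nnreal.le

lemma lux_neg (hsym : ∀ f : X → ℝ, E (-f) = E f) (f : X → ℝ) :
    luxemburg E (-f) = luxemburg E f := by
  unfold luxemburg
  refine iInf_congr fun lam => ?_
  congr 1
  rw [smul_neg]
  rw [hsym]

include hconv h0 in
lemma cone_add {f g : X → ℝ} (hf : f ∈ modularCone E) (hg : g ∈ modularCone E) :
    f + g ∈ modularCone E := by
  obtain ⟨l1, y1, hl1, hy1, rfl⟩ := hf
  obtain ⟨l2, y2, hl2, hy2, rfl⟩ := hg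
  rcases eq_or_lt_of_le (by linarith : (0:ℝ) ≤ l1 + l2) with hs | hs
  · have h1 : l1 = 0 := by linarith
    have h2 : l2 = 0 := by linarith
    refine ⟨0, 0, le_rfl, by simp [h0], by simp [h1, h2]⟩
  · refine ⟨l1 + l2, (l1 / (l1 + l2)) • y1 + (l2 / (l1 + l2)) • y2, hs.le, ?_, ?_⟩
    · have := hconv y1 y2 (l1 / (l1 + l2)) (l2 / (l1 + l2))
        (by positivity) (by positivity) (by field_simp)
      refine ne_top_of_le_ne_top ?_ this
      exact ENNReal.add_ne_top.mpr
        ⟨ENNReal.mul_ne_top ENNReal.ofReal_ne_top hy1,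
         ENNReal.mul_ne_top ENNReal.ofReal_ne_top hy2⟩
    · rw [smul_add, smul_smul, smul_smul]
      have hs' : l1 + l2 ≠ 0 := hs.ne'
      congr 2 <;> field_simp

lemma cone_smul (hsym : ∀ f : X → ℝ, E (-f) = E f) (c : ℝ) {f : X → ℝ}
    (hf : f ∈ modularCone E) : c • f ∈ modularCone E := by
  obtain ⟨l, y, hl, hy, rfl⟩ := hf
  rcases le_or_gt 0 c with hc | hc
  · exact ⟨c * l, y, by positivity, hy, by rw [smul_smul]⟩
  · refine ⟨(-c) * l, -y, by nlinarith, by rw [hsym]; exact hy, ?_⟩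
    rw [smul_smul, smul_neg, ← neg_smul]
    ring_nf

lemma cone_neg (hsym : ∀ f : X → ℝ, E (-f) = E f) {f : X → ℝ}
    (hf : f ∈ modularCone E) : -f ∈ modularCone E := by
  have := cone_smul hsym (-1) hf
  simpa using this

include hconv h0 in
lemma cone_sub (hsym : ∀ f : X → ℝ, E (-f) = E f) {f g : X → ℝ}
    (hf : f ∈ modularCone E) (hg : g ∈ modularCone E) : f - g ∈ modularCone E := by
  rw [sub_eq_add_neg]
  exact cone_add hconv h0 hf (cone_neg hsym hg)

lemma mem_cone_of_finite {f : X → ℝ} (hf : E f ≠ ⊤) : f ∈ modularCone E :=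
  ⟨1, f, zero_le_one, hf, (one_smul _ _).symm⟩

include hconv h0 in
lemma mem_cone_of_lux_lt {f : X → ℝ} {lam : ℝ} (hl : 0 < lam)
    (h : luxemburg E f < ENNReal.ofReal lam) : f ∈ modularCone E := by
  have hE := E_le_one_of_lux_lt hconv h0 hl h
  exact ⟨lam, lam⁻¹ • f, hl.le, ne_top_of_le_ne_top one_ne_top hE,
    by rw [smul_smul, mul_inv_cancel₀ hl.ne', one_smul]⟩

include hconv h0 in
lemma lux_le_max_one (f : X → ℝ) {y : ℝ} (hy : 0 ≤ y) (hE : E f ≤ ENNReal.ofReal y) :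
    luxemburg E f ≤ ENNReal.ofReal (max 1 y) := by
  set M := max 1 y with hM
  have hM1 : (1:ℝ) ≤ M := le_max_left _ _
  have hMpos : 0 < M := by linarith
  refine lux_le_of_mem hMpos ?_
  calc E (M⁻¹ • f) ≤ ENNReal.ofReal M⁻¹ * E f :=
        E_smul_le_s9 hconv h0 f (by positivity) (inv_le_one_of_one_le₀ hM1)
    _ ≤ ENNReal.ofReal M⁻¹ * ENNReal.ofReal y := by gcongr
    _ = ENNReal.ofReal (M⁻¹ * y) := (ENNReal.ofReal_mul (by positivity)).symm
    _ ≤ 1 := by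
        rw [ENNReal.ofReal_le_one]
        rw [inv_mul_le_iff₀ hMpos, mul_one]
        exact le_max_right _ _

include hconv h0 in
lemma eval_diff_le_ofReal {f : X → ℝ} {lam : ℝ} (x o : X) (hl : 0 < lam)
    (h : luxemburg E f < ENNReal.ofReal lam) :
    ENNReal.ofReal (f x - f o) ≤ ENNReal.ofReal lam * eRes E x o := by
  have hE := E_le_one_of_lux_lt hconv h0 hl h
  have h1 : ENNReal.ofReal ((lam⁻¹ • f) x - (lam⁻¹ • f) o) ≤ eRes E x o := by
    refine le_iSup_of_le (lam⁻¹ • f) ?_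
    exact le_iSup_of_le hE le_rfl
  have h2 : (lam⁻¹ • f) x - (lam⁻¹ • f) o = lam⁻¹ * (f x - f o) := by
    simp [Pi.smul_apply, smul_eq_mul]; ring
  rw [h2] at h1
  calc ENNReal.ofReal (f x - f o) = ENNReal.ofReal (lam * (lam⁻¹ * (f x - f o))) := by
        rw [← mul_assoc, mul_inv_cancel₀ hl.ne', one_mul]
    _ = ENNReal.ofReal lam * ENNReal.ofReal (lam⁻¹ * (f x - f o)) :=
        ENNReal.ofReal_mul hl.le
    _ ≤ ENNReal.ofReal lam * eRes E x o := by gcongr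

include hconv h0 in
lemma abs_eval_diff_le (hsym : ∀ f : X → ℝ, E (-f) = E f) {f : X → ℝ} {lam : ℝ} (x o : X)
    (hl : 0 < lam) (h : luxemburg E f < ENNReal.ofReal lam) (hfin : eRes E x o ≠ ⊤) :
    |f x - f o| ≤ lam * (eRes E x o).toReal := by
  have hR : 0 ≤ (eRes E x o).toReal := ENNReal.toReal_nonneg
  have key : ∀ g : X → ℝ, luxemburg E g < ENNReal.ofReal lam →
      g x - g o ≤ lam * (eRes E x o).toReal := by
    intro g hg
    have h1 := eval_diff_le_ofReal hconv h0 x o hl hg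
    rw [← ENNReal.ofReal_toReal hfin, ← ENNReal.ofReal_mul hl.le] at h1
    rcases le_or_gt (g x - g o) 0 with hle | hlt
    · nlinarith
    · exact (ENNReal.ofReal_le_ofReal_iff (by positivity)).mp h1
  have hneg : luxemburg E (-f) < ENNReal.ofReal lam := by rwa [lux_neg hsym]
  have k1 := key f h
  have k2 := key (-f) hneg
  simp only [Pi.neg_apply] at k2
  rw [abs_sub_le_iff]
  exact ⟨k1, by linarith⟩

include hconv h0 in
lemma tendsto_eval_diff (hsym : ∀ f : X → ℝ, E (-f) = E f) {u : ℕ → X → ℝ} (x o : X)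
    (hu : Filter.Tendsto (fun k => luxemburg E (u k)) atTop (nhds 0))
    (hfin : eRes E x o ≠ ⊤) :
    Filter.Tendsto (fun k => u k x - u k o) atTop (nhds 0) := by
  rw [Metric.tendsto_atTop]
  intro ε hε
  set R : ℝ := (eRes E x o).toReal + 1 with hRdef
  have hR : 0 < R := by positivity
  have hδ : (0:ℝ≥0∞) < ENNReal.ofReal (ε / (2 * R)) := by
    rw [ENNReal.ofReal_pos]; positivity
  have hev : ∀ᶠ k in atTop, luxemburg E (u k) < ENNReal.ofReal (ε / (2 * R)) :=
    hu.eventually (Filter.Tendsto.eventually_lt_const hδ tendsto_id)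
  obtain ⟨N, hN⟩ := Filter.eventually_atTop.mp hev
  refine ⟨N, fun k hk => ?_⟩
  have hb := abs_eval_diff_le hconv h0 hsym x o (by positivity : (0:ℝ) < ε / (2 * R))
    (hN k hk) hfin
  have hRle : (eRes E x o).toReal ≤ R := by rw [hRdef]; linarith
  rw [Real.dist_eq, sub_zero]
  calc |u k x - u k o| ≤ ε / (2 * R) * (eRes E x o).toReal := hb
    _ ≤ ε / (2 * R) * R := by
        have : 0 ≤ ε / (2 * R) := by positivity
        nlinarith [ENNReal.toReal_nonneg (a := eRes E x o)]
    _ = ε / 2 := by field_simp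
    _ < ε := by linarith


lemma exists_ofReal_le {ε : ℝ≥0∞} (h : 0 < ε) : ∃ r : ℝ, 0 < r ∧ ENNReal.ofReal r ≤ ε := by
  rcases eq_or_ne ε ⊤ with rfl | hne
  · exact ⟨1, one_pos, le_top⟩
  · have ht : 0 < ε.toReal := ENNReal.toReal_pos h.ne' hne
    refine ⟨ε.toReal / 2, by positivity, ?_⟩
    calc ENNReal.ofReal (ε.toReal / 2) ≤ ENNReal.ofReal ε.toReal :=
          ENNReal.ofReal_le_ofReal (by linarith)
      _ = ε := ENNReal.ofReal_toReal hne

lemma lsc_to_seq (h : LowerSemicontinuous E) : SeqLowerSemicontinuous E := by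
  intro f g hpt
  have htend : Filter.Tendsto f atTop (nhds g) := tendsto_pi_nhds.mpr hpt
  by_contra hcon
  push_neg at hcon
  obtain ⟨y, hy1, hy2⟩ := exists_between hcon
  have hev : ∀ᶠ n in atTop, y < E (f n) := htend.eventually ((h g) y hy2)
  have hle : y ≤ Filter.liminf (fun n => E (f n)) atTop :=
    le_liminf_of_le (by isBoundedDefault) (hev.mono fun n hn => hn.le)
  exact absurd hle (not_le.mpr hy1)

include hconv h0 in
lemma seq_to_leftcont (hseq : SeqLowerSemicontinuous E) : LeftContinuousFunctional E := by
  intro h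
  rw [tendsto_order]
  constructor
  · intro a ha
    have claim : ∃ l0 : ℝ, l0 ∈ Set.Ioo (0:ℝ) 1 ∧ a < E (l0 • h) := by
      by_contra hcon
      push_neg at hcon
      have hlam : ∀ n : ℕ, (1 - ((n:ℝ) + 2)⁻¹) ∈ Set.Ioo (0:ℝ) 1 := by
        intro n
        constructor
        · have h2 : ((n:ℝ) + 2)⁻¹ ≤ 2⁻¹ := by
            apply inv_anti₀ <;> norm_num
          linarith
        · have : (0:ℝ) < ((n:ℝ) + 2)⁻¹ := by positivity
          linarith
      have hpt : ∀ x : X, Filter.Tendsto (fun n : ℕ => ((1 - ((n:ℝ) + 2)⁻¹) • h) x)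
          atTop (nhds (h x)) := by
        intro x
        simp only [Pi.smul_apply, smul_eq_mul]
        have h1 : Filter.Tendsto (fun n : ℕ => ((n:ℝ) + 2)⁻¹) atTop (nhds 0) :=
          tendsto_inv_atTop_zero.comp
            (tendsto_atTop_add_const_right _ 2 tendsto_natCast_atTop_atTop)
        have h2 : Filter.Tendsto (fun n : ℕ => 1 - ((n:ℝ) + 2)⁻¹) atTop (nhds 1) := by
          have := (tendsto_const_nhds (x := (1:ℝ)) (f := atTop (α := ℕ))).sub h1
          simpa using this
        have := h2.mul (tendsto_const_nhds (x := h x))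
        simpa using this
      have hEh := hseq (fun n => (1 - ((n:ℝ) + 2)⁻¹) • h) h hpt
      have hub : Filter.liminf (fun n : ℕ => E ((1 - ((n:ℝ) + 2)⁻¹) • h)) atTop ≤ a :=
        liminf_le_of_le (by isBoundedDefault) (fun b hb => by
          obtain ⟨n, hn⟩ := hb.exists
          exact hn.trans (hcon _ (hlam n)))
      exact absurd (hEh.trans hub) (not_le.mpr ha)
    obtain ⟨l0, hl0, hal0⟩ := claim
    have hIoo : Set.Ioo l0 1 ∈ nhdsWithin 1 (Set.Iio 1) :=
      Ioo_mem_nhdsLT_of_mem (by constructor; exacts [hl0.2, le_rfl])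
    filter_upwards [hIoo] with lam hlam
    exact lt_of_lt_of_le hal0 (E_mono_ray hconv h0 h hl0.1.le hlam.1.le)
  · intro a ha
    have hIoo : Set.Ioo (0:ℝ) 1 ∈ nhdsWithin 1 (Set.Iio 1) :=
      Ioo_mem_nhdsLT_of_mem (by constructor <;> norm_num)
    filter_upwards [hIoo] with lam hlam
    calc E (lam • h) ≤ E ((1:ℝ) • h) := E_mono_ray hconv h0 h hlam.1.le hlam.2.le
      _ = E h := by rw [one_smul]
      _ < a := ha

include hconv h0 in
lemma seq_to_complete [Nonempty X] (hsym : ∀ f : X → ℝ, E (-f) = E f)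
    (hseq : SeqLowerSemicontinuous E)
    (hker₁ : ∀ c : ℝ, (fun _ => c : X → ℝ) ∈ modularCone E ∧
      luxemburg E (fun _ => c) = 0)
    (hfin : ∀ x y : X, eRes E x y ≠ ⊤) :
    ∀ f : ℕ → X → ℝ, (∀ n, f n ∈ modularCone E) →
      (∀ ε : ℝ≥0∞, 0 < ε → ∃ N : ℕ, ∀ m ≥ N, ∀ n ≥ N, luxemburg E (f m - f n) < ε) →
      ∃ g ∈ modularCone E,
        Filter.Tendsto (fun n => luxemburg E (f n - g)) Filter.atTop (nhds 0) := by
  intro f hfcone hcauchy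
  obtain o : X := Classical.arbitrary X
  set h : ℕ → X → ℝ := fun n => f n - (fun _ => f n o) with hh
  have hho : ∀ n, h n o = 0 := fun n => by simp [hh]
  have hhcone : ∀ n, h n ∈ modularCone E := fun n =>
    cone_sub hconv h0 hsym (hfcone n) (hker₁ (f n o)).1
  -- lux of differences of h is bounded by lux of differences of f
  have hdiff : ∀ m n, luxemburg E (h m - h n) ≤ luxemburg E (f m - f n) := by
    intro m n
    have hdec : h m - h n = (f m - f n) + (fun _ => f n o - f m o) := by
      funext x; simp [hh]; ring
    calc luxemburg E (h m - h n)
        ≤ luxemburg E (f m - f n) + luxemburg E (fun _ => f n o - f m o) := by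
          rw [hdec]; exact lux_triangle hconv h0 _ _
      _ = luxemburg E (f m - f n) := by rw [(hker₁ _).2, add_zero]
  -- pointwise Cauchy
  have hptC : ∀ x : X, CauchySeq (fun n => h n x) := by
    intro x
    rw [Metric.cauchySeq_iff]
    intro ε hε
    set R : ℝ := (eRes E x o).toReal + 1 with hRdef
    have hR : 0 < R := by positivity
    have hlampos : 0 < ε / (2 * R) := by positivity
    obtain ⟨N, hN⟩ := hcauchy (ENNReal.ofReal (ε / (2 * R)))
      (by rw [ENNReal.ofReal_pos]; exact hlampos)
    refine ⟨N, fun m hm n hn => ?_⟩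
    have hlt : luxemburg E (h m - h n) < ENNReal.ofReal (ε / (2 * R)) :=
      lt_of_le_of_lt (hdiff m n) (hN m hm n hn)
    have hb := abs_eval_diff_le hconv h0 hsym x o hlampos hlt (hfin x o)
    have hval : (h m - h n) x - (h m - h n) o = h m x - h n x := by
      simp [hho]
    rw [hval] at hb
    rw [Real.dist_eq]
    have hRle : (eRes E x o).toReal ≤ R := by rw [hRdef]; linarith
    calc |h m x - h n x| ≤ ε / (2 * R) * (eRes E x o).toReal := hb
      _ ≤ ε / (2 * R) * R := by nlinarith [ENNReal.toReal_nonneg (a := eRes E x o)]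
      _ = ε / 2 := by field_simp
      _ < ε := by linarith
  have hg : ∀ x : X, ∃ L : ℝ, Filter.Tendsto (fun n => h n x) atTop (nhds L) := fun x =>
    cauchySeq_tendsto_of_complete (hptC x)
  choose g hgt using hg
  -- key estimate
  have key : ∀ ε : ℝ, 0 < ε → ∃ N : ℕ, ∀ n ≥ N, E (ε⁻¹ • (g - h n)) ≤ 1 := by
    intro ε hε
    obtain ⟨N, hN⟩ := hcauchy (ENNReal.ofReal ε) (by rw [ENNReal.ofReal_pos]; exact hε)
    refine ⟨N, fun n hn => ?_⟩
    have hEle : ∀ m ≥ N, E (ε⁻¹ • (h m - h n)) ≤ 1 := fun m hm =>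
      E_le_one_of_lux_lt hconv h0 hε (lt_of_le_of_lt (hdiff m n) (hN m hm n hn))
    have hpt : ∀ x : X, Filter.Tendsto (fun m => (ε⁻¹ • (h m - h n)) x) atTop
        (nhds ((ε⁻¹ • (g - h n)) x)) := by
      intro x
      simp only [Pi.smul_apply, Pi.sub_apply, smul_eq_mul]
      exact (tendsto_const_nhds.mul ((hgt x).sub tendsto_const_nhds))
    have := hseq (fun m => ε⁻¹ • (h m - h n)) (ε⁻¹ • (g - h n)) hpt
    refine this.trans ?_
    refine liminf_le_of_le (by isBoundedDefault) (fun b hb => ?_)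
    obtain ⟨m, hm1, hm2⟩ := (hb.and (Filter.eventually_ge_atTop N)).exists
    exact hm1.trans (hEle m hm2)
  -- the limit lies in the cone
  obtain ⟨N₁, hN₁⟩ := key 1 one_pos
  have hgN₁ : g - h N₁ ∈ modularCone E := by
    have := hN₁ N₁ le_rfl
    rw [inv_one, one_smul] at this
    exact mem_cone_of_finite (ne_top_of_le_ne_top ENNReal.one_ne_top this)
  have hgcone : g ∈ modularCone E := by
    have := cone_add hconv h0 hgN₁ (hhcone N₁)
    simpa using this
  refine ⟨g, hgcone, ?_⟩
  rw [ENNReal.tendsto_nhds_zero]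
  intro ε hε
  obtain ⟨r, hr, hrle⟩ := exists_ofReal_le hε
  obtain ⟨N, hN⟩ := key r hr
  rw [Filter.eventually_atTop]
  refine ⟨N, fun n hn => ?_⟩
  have hfg : f n - g = (h n - g) + (fun _ => f n o) := by
    funext x; simp [hh]; ring
  have h1 : luxemburg E (h n - g) ≤ ENNReal.ofReal r := by
    have : h n - g = -(g - h n) := by ring
    rw [this, lux_neg hsym]
    exact lux_le_of_mem hr (hN n hn)
  calc luxemburg E (f n - g)
      ≤ luxemburg E (h n - g) + luxemburg E (fun _ => f n o) := by
        rw [hfg]; exact lux_triangle hconv h0 _ _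
    _ = luxemburg E (h n - g) := by rw [(hker₁ _).2, add_zero]
    _ ≤ ENNReal.ofReal r := h1
    _ ≤ ε := hrle

set_option maxHeartbeats 2000000 in
include hconv h0 in
lemma hard_direction [Nonempty X] (hsym : ∀ f : X → ℝ, E (-f) = E f)
    (hrefl : ReflexiveForm E)
    (hker₁ : ∀ c : ℝ, (fun _ => c : X → ℝ) ∈ modularCone E ∧
      luxemburg E (fun _ => c) = 0)
    (hfin : ∀ x y : X, eRes E x y ≠ ⊤)
    (hleft : LeftContinuousFunctional E)
    (hcomp : ∀ f : ℕ → X → ℝ, (∀ n, f n ∈ modularCone E) →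
      (∀ ε : ℝ≥0∞, 0 < ε → ∃ N : ℕ, ∀ m ≥ N, ∀ n ≥ N, luxemburg E (f m - f n) < ε) →
      ∃ g ∈ modularCone E,
        Filter.Tendsto (fun n => luxemburg E (f n - g)) Filter.atTop (nhds 0)) :
    LowerSemicontinuous E := by
  intro f y hy
  by_contra hcon
  have hfreq : ∃ᶠ g in nhds f, E g ≤ y := by
    rw [Filter.not_eventually] at hcon
    exact hcon.mono fun g hg => not_lt.mp hg
  have hyt : y ≠ ⊤ := (lt_of_lt_of_le hy le_top).ne
  obtain ⟨W⟩ := hrefl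
  letI : NormedAddCommGroup W.B := W.normedInst
  letI : NormedSpace ℝ W.B := W.nspaceInst
  letI : CompleteSpace W.B := W.completeInst
  set sE : Set (X → ℝ) := {g | E g ≤ y} with hsE
  set G : Filter (X → ℝ) := nhds f ⊓ Filter.principal sE with hGdef
  have hGne : G.NeBot := by
    rw [hGdef, Filter.inf_principal_neBot_iff]
    intro U hU
    obtain ⟨g, hgE, hgU⟩ := (hfreq.and_eventually hU).exists
    exact ⟨g, hgU, hgE⟩
  set M : ℝ := max 1 y.toReal with hMdef
  have hM0 : (0:ℝ) ≤ M := le_trans zero_le_one (le_max_left _ _)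
  have hsEcone : ∀ g ∈ sE, g ∈ modularCone E := fun g hg =>
    mem_cone_of_finite (ne_top_of_le_ne_top hyt hg)
  have hsElux : ∀ g ∈ sE, luxemburg E g ≤ ENNReal.ofReal M := by
    intro g hg
    exact lux_le_max_one hconv h0 g ENNReal.toReal_nonneg
      (by rw [ENNReal.ofReal_toReal hyt]; exact hg)
  have hsEnorm : ∀ g ∈ sE, ‖W.T g‖ ≤ M := by
    intro g hg
    have h1 : ENNReal.ofReal ‖W.T g‖ ≤ ENNReal.ofReal M := by
      rw [W.isometric g (hsEcone g hg)]
      exact hsElux g hg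
    exact (ENNReal.ofReal_le_ofReal_iff hM0).mp h1
  -- push into the weak-star bidual
  set Φ : (X → ℝ) → WeakDual ℝ (StrongDual ℝ W.B) := fun g =>
    StrongDual.toWeakDual (NormedSpace.inclusionInDoubleDual ℝ W.B (W.T g)) with hΦdef
  set Fw : Filter (WeakDual ℝ (StrongDual ℝ W.B)) := Filter.map Φ G with hFwdef
  haveI : Fw.NeBot := Filter.map_neBot
  set K : Set (WeakDual ℝ (StrongDual ℝ W.B)) :=
    WeakDual.toStrongDual ⁻¹' Metric.closedBall 0 M with hKdef
  have hKcompact : IsCompact K := WeakDual.isCompact_closedBall 0 M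
  have hFwK : Fw ≤ Filter.principal K := by
    rw [Filter.le_principal_iff, hFwdef, Filter.mem_map]
    have hsub : sE ⊆ Φ ⁻¹' K := by
      intro g hg
      simp only [Set.mem_preimage, hKdef, Metric.mem_closedBall, dist_zero_right, hΦdef]
      refine (dist_zero_right (E := StrongDual ℝ (StrongDual ℝ W.B)) _).trans_le ?_
      calc ‖(WeakDual.toStrongDual (StrongDual.toWeakDual
            (NormedSpace.inclusionInDoubleDual ℝ W.B (W.T g))))‖
          = ‖NormedSpace.inclusionInDoubleDual ℝ W.B (W.T g)‖ := rfl
        _ ≤ ‖W.T g‖ := NormedSpace.double_dual_bound ℝ W.B _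
        _ ≤ M := hsEnorm g hg
    exact Filter.mem_of_superset (Filter.mem_inf_of_right (Filter.mem_principal_self sE)) hsub
  obtain ⟨x'', hx''K, hx''cl⟩ := hKcompact.exists_clusterPt hFwK
  obtain ⟨b, hb⟩ := W.reflexiveB (WeakDual.toStrongDual x'')
  have hΦeval : ∀ (g : X → ℝ) (φ : StrongDual ℝ W.B), Φ g φ = φ (W.T g) := fun g φ => rfl
  have hx''eval : ∀ φ : StrongDual ℝ W.B, x'' φ = φ b := by
    intro φ
    have h1 : WeakDual.toStrongDual x'' φ = x'' φ := rfl
    rw [← h1, ← hb]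
    rfl
  -- Mazur-type lemma: `b` is in the norm closure of the image of every convex set in `G`
  have mazur : ∀ s : Set (X → ℝ), s ∈ G → s ⊆ sE →
      (∀ g₁ ∈ s, ∀ g₂ ∈ s, ∀ a c : ℝ, 0 ≤ a → 0 ≤ c → a + c = 1 → a • g₁ + c • g₂ ∈ s) →
      ∀ δ : ℝ, 0 < δ → ∃ hh ∈ s, ‖W.T hh - b‖ < δ := by
    intro s hsG hssE hsconv δ hδ
    set A : Set W.B := W.T '' s with hAdef
    have hAconv : Convex ℝ A := by
      intro p hp q hq a c ha hc hac
      obtain ⟨g₁, hg₁, rfl⟩ := hp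
      obtain ⟨g₂, hg₂, rfl⟩ := hq
      refine ⟨a • g₁ + c • g₂, hsconv g₁ hg₁ g₂ hg₂ a c ha hc hac, ?_⟩
      rw [W.map_add _ (cone_smul hsym a (hsEcone _ (hssE hg₁)))
        _ (cone_smul hsym c (hsEcone _ (hssE hg₂))),
        W.map_smul a _ (hsEcone _ (hssE hg₁)), W.map_smul c _ (hsEcone _ (hssE hg₂))]
    have hbA : b ∈ closure A := by
      by_contra hbn
      obtain ⟨φ, u, hAu, hub⟩ :=
        geometric_hahn_banach_closed_point (hAconv.closure) isClosed_closure
          (fun hmem => hbn hmem)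
      set V : Set (WeakDual ℝ (StrongDual ℝ W.B)) :=
        (fun z : WeakDual ℝ (StrongDual ℝ W.B) => z φ) ⁻¹' Set.Ioi u with hVdef
      have hVopen : IsOpen V := (WeakDual.eval_continuous φ).isOpen_preimage _ isOpen_Ioi
      have hx''V : x'' ∈ V := by
        simp only [hVdef, Set.mem_preimage, Set.mem_Ioi]
        rw [hx''eval φ]
        exact hub
      have hVmem : V ∈ nhds x'' := hVopen.mem_nhds hx''V
      have himg : Φ '' s ∈ Fw := Filter.image_mem_map hsG
      have hne : (V ∩ Φ '' s).Nonempty := by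
        haveI := hx''cl.neBot
        exact Filter.nonempty_of_mem
          (Filter.inter_mem (Filter.mem_inf_of_left hVmem) (Filter.mem_inf_of_right himg))
      obtain ⟨z, hzV, g, hgs, rfl⟩ := hne
      have h1 : u < Φ g φ := hzV
      rw [hΦeval g φ] at h1
      have h2 : φ (W.T g) < u := hAu _ (subset_closure ⟨g, hgs, rfl⟩)
      linarith
    rw [Metric.mem_closure_iff] at hbA
    obtain ⟨p, hpA, hpd⟩ := hbA δ hδ
    obtain ⟨hh, hhs, rfl⟩ := hpA
    exact ⟨hh, hhs, by rwa [← dist_eq_norm, dist_comm]⟩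
  -- convexity of sE
  have hsEconv : ∀ g₁ ∈ sE, ∀ g₂ ∈ sE, ∀ a c : ℝ, 0 ≤ a → 0 ≤ c → a + c = 1 →
      a • g₁ + c • g₂ ∈ sE := by
    intro g₁ hg₁ g₂ hg₂ a c ha hc hac
    show E (a • g₁ + c • g₂) ≤ y
    calc E (a • g₁ + c • g₂) ≤ ENNReal.ofReal a * E g₁ + ENNReal.ofReal c * E g₂ :=
          hconv _ _ _ _ ha hc hac
      _ ≤ ENNReal.ofReal a * y + ENNReal.ofReal c * y := by gcongr <;> assumption
      _ = (ENNReal.ofReal a + ENNReal.ofReal c) * y := by ring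
      _ = y := by rw [← ENNReal.ofReal_add ha hc, hac]; simp
  have hsEG : sE ∈ G := Filter.mem_inf_of_right (Filter.mem_principal_self sE)
  -- the approximating sequence
  have hk : ∀ k : ℕ, ∃ hh ∈ sE, ‖W.T hh - b‖ < 1 / ((k:ℝ) + 1) :=
    fun k => mazur sE hsEG subset_rfl hsEconv _ (by positivity)
  choose hkf hkfE hkfn using hk
  have hkcone : ∀ k, hkf k ∈ modularCone E := fun k => hsEcone _ (hkfE k)
  have hTsub : ∀ u v : X → ℝ, u ∈ modularCone E → v ∈ modularCone E →
      W.T (u - v) = W.T u - W.T v := by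
    intro u v hu hv
    rw [sub_eq_add_neg, W.map_add u hu (-v) (cone_neg hsym hv)]
    have : -v = (-1 : ℝ) • v := by simp
    rw [this, W.map_smul (-1) v hv]
    simp [sub_eq_add_neg]
  have hluxnorm : ∀ m n : ℕ, luxemburg E (hkf m - hkf n)
      = ENNReal.ofReal ‖W.T (hkf m) - W.T (hkf n)‖ := by
    intro m n
    rw [← hTsub _ _ (hkcone m) (hkcone n),
      W.isometric _ (cone_sub hconv h0 hsym (hkcone m) (hkcone n))]
  -- Cauchy in the Luxemburg seminorm
  have hcauchy : ∀ ε : ℝ≥0∞, 0 < ε → ∃ N : ℕ, ∀ m ≥ N, ∀ n ≥ N,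
      luxemburg E (hkf m - hkf n) < ε := by
    intro ε hε
    obtain ⟨r, hr, hrle⟩ := exists_ofReal_le hε
    obtain ⟨N, hN⟩ := exists_nat_gt (2 / r)
    refine ⟨N, fun m hm n hn => ?_⟩
    have hnorm : ‖W.T (hkf m) - W.T (hkf n)‖ < r := by
      have h1 : ‖W.T (hkf m) - W.T (hkf n)‖
          ≤ ‖W.T (hkf m) - b‖ + ‖b - W.T (hkf n)‖ := by
        have := norm_sub_le_norm_sub_add_norm_sub (W.T (hkf m)) b (W.T (hkf n))
        linarith [norm_sub_le (W.T (hkf m) - b) (W.T (hkf n) - b)]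
      have h2 : ‖W.T (hkf m) - b‖ < 1 / ((m:ℝ) + 1) := hkfn m
      have h3 : ‖b - W.T (hkf n)‖ < 1 / ((n:ℝ) + 1) := by
        rw [norm_sub_rev]; exact hkfn n
      have hm' : 1 / ((m:ℝ) + 1) ≤ 1 / ((N:ℝ) + 1) := by
        apply one_div_le_one_div_of_le (by positivity)
        have : (N:ℝ) ≤ m := Nat.cast_le.mpr hm
        linarith
      have hn' : 1 / ((n:ℝ) + 1) ≤ 1 / ((N:ℝ) + 1) := by
        apply one_div_le_one_div_of_le (by positivity)
        have : (N:ℝ) ≤ n := Nat.cast_le.mpr hn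
        linarith
      have hNr : 2 / ((N:ℝ) + 1) < r := by
        rw [div_lt_iff₀ (by positivity)]
        rw [div_lt_iff₀ hr] at hN
        nlinarith
      have hsum : 1 / ((N:ℝ) + 1) + 1 / ((N:ℝ) + 1) = 2 / ((N:ℝ) + 1) := by ring
      linarith
    calc luxemburg E (hkf m - hkf n) = ENNReal.ofReal ‖W.T (hkf m) - W.T (hkf n)‖ :=
          hluxnorm m n
      _ < ENNReal.ofReal r := by
          rw [ENNReal.ofReal_lt_ofReal_iff hr]; exact hnorm
      _ ≤ ε := hrle
  obtain ⟨g₀, hg₀cone, hg₀t⟩ := hcomp hkf hkcone hcauchy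
  set o : X := Classical.arbitrary X with hodef
  have habs_lt : ∀ a c u v ε : ℝ, 0 ≤ a → 0 ≤ c → a + c = 1 → |u| < ε → |v| < ε →
      |a * u + c * v| < ε := by
    intro a c u v ε ha hc hac hu hv
    have habs : |a * u + c * v| ≤ a * |u| + c * |v| := by
      calc |a * u + c * v| ≤ |a * u| + |c * v| := abs_add_le _ _
        _ = a * |u| + c * |v| := by rw [abs_mul, abs_mul, abs_of_nonneg ha, abs_of_nonneg hc]
    rcases eq_or_lt_of_le ha with ha0 | ha0
    · have ha0' : a = 0 := ha0.symm
      have hc1 : c = 1 := by linarith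
      rw [ha0', hc1]
      simpa using hv
    · have h1 : a * |u| < a * ε := by nlinarith
      have h2 : c * |v| ≤ c * ε := by nlinarith [abs_nonneg v]
      have h3 : a * ε + c * ε = ε := by rw [← add_mul, hac, one_mul]
      linarith
  -- identification of the limit: `f` and `g₀` differ by a constant
  have hfg : ∀ x : X, f x - f o = g₀ x - g₀ o := by
    intro x
    have hsk : ∀ k : ℕ, ∃ hh, (hh ∈ sE ∧ |hh x - f x| < 1/((k:ℝ)+1) ∧
        |hh o - f o| < 1/((k:ℝ)+1)) ∧ ‖W.T hh - b‖ < 1/((k:ℝ)+1) := by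
      intro k
      set εk : ℝ := 1/((k:ℝ)+1) with hεk
      have hεkpos : 0 < εk := by positivity
      set s : Set (X → ℝ) := sE ∩ ((fun g : X → ℝ => g x) ⁻¹' Metric.ball (f x) εk)
          ∩ ((fun g : X → ℝ => g o) ⁻¹' Metric.ball (f o) εk) with hsdef
      have hmem_iff : ∀ g : X → ℝ, g ∈ s ↔ E g ≤ y ∧ |g x - f x| < εk ∧ |g o - f o| < εk := by
        intro g
        simp only [hsdef, Set.mem_inter_iff, Set.mem_preimage, Metric.mem_ball, Real.dist_eq]
        tauto
      have hsG : s ∈ G := by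
        refine Filter.inter_mem (Filter.inter_mem hsEG ?_) ?_
        · refine Filter.mem_inf_of_left
            ((Metric.isOpen_ball.preimage (continuous_apply x)).mem_nhds ?_)
          simp [Metric.mem_ball, hεkpos]
        · refine Filter.mem_inf_of_left
            ((Metric.isOpen_ball.preimage (continuous_apply o)).mem_nhds ?_)
          simp [Metric.mem_ball, hεkpos]
      have hssE : s ⊆ sE := fun g hg => hg.1.1
      have hsconv : ∀ g₁ ∈ s, ∀ g₂ ∈ s, ∀ a c : ℝ, 0 ≤ a → 0 ≤ c → a + c = 1 →
          a • g₁ + c • g₂ ∈ s := by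
        intro g₁ hg₁ g₂ hg₂ a c ha hc hac
        rw [hmem_iff] at hg₁ hg₂ ⊢
        refine ⟨hsEconv g₁ hg₁.1 g₂ hg₂.1 a c ha hc hac, ?_, ?_⟩
        · have h1 : (a • g₁ + c • g₂) x - f x = a * (g₁ x - f x) + c * (g₂ x - f x) := by
            simp only [Pi.add_apply, Pi.smul_apply, smul_eq_mul]
            linear_combination f x * hac
          rw [h1]
          exact habs_lt a c _ _ _ ha hc hac hg₁.2.1 hg₂.2.1
        · have h1 : (a • g₁ + c • g₂) o - f o = a * (g₁ o - f o) + c * (g₂ o - f o) := by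
            simp only [Pi.add_apply, Pi.smul_apply, smul_eq_mul]
            linear_combination f o * hac
          rw [h1]
          exact habs_lt a c _ _ _ ha hc hac hg₁.2.2 hg₂.2.2
      obtain ⟨hh, hhs, hhn⟩ := mazur s hsG hssE hsconv εk hεkpos
      exact ⟨hh, (hmem_iff hh).mp hhs, hhn⟩
    choose hks hksmem hksn using hsk
    have hone : Filter.Tendsto (fun k : ℕ => 1/((k:ℝ)+1)) atTop (nhds 0) :=
      tendsto_one_div_add_atTop_nhds_zero_nat
    -- (a) pointwise convergence of the auxiliary sequence at x and o
    have hBlim : Filter.Tendsto (fun k => hks k x - hks k o) atTop (nhds (f x - f o)) := by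
      have hx1 : Filter.Tendsto (fun k => hks k x) atTop (nhds (f x)) := by
        rw [tendsto_iff_dist_tendsto_zero]
        refine squeeze_zero (fun k => dist_nonneg) (fun k => ?_) hone
        rw [Real.dist_eq]
        exact ((hksmem k).2.1).le
      have ho1 : Filter.Tendsto (fun k => hks k o) atTop (nhds (f o)) := by
        rw [tendsto_iff_dist_tendsto_zero]
        refine squeeze_zero (fun k => dist_nonneg) (fun k => ?_) hone
        rw [Real.dist_eq]
        exact ((hksmem k).2.2).le
      exact hx1.sub ho1
    -- (b) Luxemburg distance of the two approximating sequences tends to 0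
    have hkscone : ∀ k, hks k ∈ modularCone E := fun k => hsEcone _ (hksmem k).1
    have hbk : Filter.Tendsto (fun k => luxemburg E (hkf k - hks k)) atTop (nhds 0) := by
      have heq : ∀ k, luxemburg E (hkf k - hks k)
          = ENNReal.ofReal ‖W.T (hkf k) - W.T (hks k)‖ := by
        intro k
        rw [← hTsub _ _ (hkcone k) (hkscone k),
          W.isometric _ (cone_sub hconv h0 hsym (hkcone k) (hkscone k))]
      have hnorm : Filter.Tendsto (fun k => ‖W.T (hkf k) - W.T (hks k)‖) atTop (nhds 0) := by
        have hb2 : Filter.Tendsto (fun k : ℕ => 1/((k:ℝ)+1) + 1/((k:ℝ)+1)) atTop (nhds 0) := by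
          simpa using hone.add hone
        refine squeeze_zero (fun k => norm_nonneg _) (fun k => ?_) hb2
        calc ‖W.T (hkf k) - W.T (hks k)‖ ≤ ‖W.T (hkf k) - b‖ + ‖b - W.T (hks k)‖ := by
              have := dist_triangle (W.T (hkf k)) b (W.T (hks k))
              simpa [dist_eq_norm] using this
          _ ≤ 1/((k:ℝ)+1) + 1/((k:ℝ)+1) := by
              have h3 : ‖b - W.T (hks k)‖ < 1/((k:ℝ)+1) := by rw [norm_sub_rev]; exact hksn k
              linarith [hkfn k]
      have heq' : (fun k => luxemburg E (hkf k - hks k))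
          = fun k => ENNReal.ofReal ‖W.T (hkf k) - W.T (hks k)‖ := funext heq
      rw [heq']
      have := ENNReal.tendsto_ofReal (a := 0) hnorm
      simpa using this
    -- (b') and (c): transfer to pointwise differences
    have hdiffbk := tendsto_eval_diff hconv h0 hsym x o hbk (hfin x o)
    have hck := tendsto_eval_diff hconv h0 hsym x o hg₀t (hfin x o)
    have hA1 : Filter.Tendsto (fun k => hkf k x - hkf k o) atTop (nhds (g₀ x - g₀ o)) := by
      have h1 := hck.add (tendsto_const_nhds (x := g₀ x - g₀ o))
      have heq2 : (fun k => ((hkf k - g₀) x - (hkf k - g₀) o) + (g₀ x - g₀ o))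
          = fun k => hkf k x - hkf k o := by
        funext k; simp only [Pi.sub_apply]; ring
      rw [heq2] at h1
      simpa using h1
    have hA2 : Filter.Tendsto (fun k => hkf k x - hkf k o) atTop (nhds (f x - f o)) := by
      have h1 := hdiffbk.add hBlim
      have heq2 : (fun k => ((hkf k - hks k) x - (hkf k - hks k) o) + (hks k x - hks k o))
          = fun k => hkf k x - hkf k o := by
        funext k; simp only [Pi.sub_apply]; ring
      rw [heq2] at h1
      simpa using h1
    exact tendsto_nhds_unique hA2 hA1
  -- hence `f - g₀` is constant
  have hconst : f - g₀ = fun _ => f o - g₀ o := by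
    funext x
    have := hfg x
    simp only [Pi.sub_apply]
    linarith
  have hluxfg : luxemburg E (f - g₀) = 0 := by rw [hconst]; exact (hker₁ _).2
  -- lux (f - hkf k) → 0
  have hfk : Filter.Tendsto (fun k => luxemburg E (f - hkf k)) atTop (nhds 0) := by
    have hbound : ∀ k, luxemburg E (f - hkf k) ≤ luxemburg E (hkf k - g₀) := by
      intro k
      have hdec : f - hkf k = (f - g₀) + -(hkf k - g₀) := by abel
      calc luxemburg E (f - hkf k) ≤ luxemburg E (f - g₀) + luxemburg E (-(hkf k - g₀)) := by
            rw [hdec]; exact lux_triangle hconv h0 _ _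
        _ = luxemburg E (hkf k - g₀) := by rw [hluxfg, zero_add, lux_neg hsym]
    exact tendsto_of_tendsto_of_tendsto_of_le_of_le tendsto_const_nhds hg₀t
      (fun k => zero_le) hbound
  -- the key estimate on scaled energies
  have hfinal : ∀ lam : ℝ, lam ∈ Set.Ioo (0:ℝ) 1 →
      E (lam • f) ≤ ENNReal.ofReal lam * y + ENNReal.ofReal (1 - lam) := by
    intro lam hlam
    have h1l : 0 < 1 - lam := by linarith [hlam.2]
    set c : ℝ := lam / (1 - lam) with hcdef
    have hcpos : 0 < c := div_pos hlam.1 h1l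
    have hinvpos : 0 < c⁻¹ := by positivity
    have hev : ∀ᶠ k in atTop, luxemburg E (f - hkf k) < ENNReal.ofReal c⁻¹ :=
      hfk.eventually (Filter.Tendsto.eventually_lt_const
        (by rw [ENNReal.ofReal_pos]; exact hinvpos) tendsto_id)
    obtain ⟨k, hk⟩ := hev.exists
    have hE1 : E (c • (f - hkf k)) ≤ 1 := by
      have := E_le_one_of_lux_lt hconv h0 hinvpos hk
      rwa [inv_inv] at this
    have hdec : lam • f = lam • hkf k + (1 - lam) • (c • (f - hkf k)) := by
      funext z
      simp only [Pi.add_apply, Pi.smul_apply, Pi.sub_apply, smul_eq_mul]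
      rw [hcdef]
      field_simp
      ring
    calc E (lam • f) ≤ ENNReal.ofReal lam * E (hkf k)
          + ENNReal.ofReal (1 - lam) * E (c • (f - hkf k)) := by
          rw [hdec]; exact hconv _ _ _ _ hlam.1.le h1l.le (by ring)
      _ ≤ ENNReal.ofReal lam * y + ENNReal.ofReal (1 - lam) * 1 :=
          add_le_add (mul_le_mul' le_rfl (hkfE k)) (mul_le_mul' le_rfl hE1)
      _ = ENNReal.ofReal lam * y + ENNReal.ofReal (1 - lam) := by rw [mul_one]
  -- conclude `E f ≤ y` using left-continuity, contradiction
  have hEfy : E f ≤ y := by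
    refine ENNReal.le_of_forall_pos_le_add ?_
    intro η hη hylt
    have hηR : (0:ℝ) < (η:ℝ) := hη
    have hl₀lt : max 0 (1 - (η:ℝ)) < 1 := by
      rw [max_lt_iff]
      constructor <;> linarith
    have hl₀ : Set.Ioo (max 0 (1 - (η:ℝ))) 1 ∈ nhdsWithin (1:ℝ) (Set.Iio 1) :=
      Ioo_mem_nhdsLT_of_mem ⟨hl₀lt, le_rfl⟩
    have hev : ∀ᶠ lam in nhdsWithin (1:ℝ) (Set.Iio 1), E (lam • f) ≤ y + (η:ℝ≥0∞) := by
      filter_upwards [hl₀] with lam hlam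
      have h1 : lam ∈ Set.Ioo (0:ℝ) 1 :=
        ⟨lt_of_le_of_lt (le_max_left 0 _) hlam.1, hlam.2⟩
      have h2 : 1 - lam ≤ (η:ℝ) := by
        have := hlam.1
        have h3 := le_max_right 0 (1 - (η:ℝ))
        linarith
      calc E (lam • f) ≤ ENNReal.ofReal lam * y + ENNReal.ofReal (1 - lam) := hfinal lam h1
        _ ≤ 1 * y + ENNReal.ofReal (η:ℝ) :=
            add_le_add (mul_le_mul' (ENNReal.ofReal_le_one.mpr h1.2.le) le_rfl)
              (ENNReal.ofReal_le_ofReal h2)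
        _ = y + (η:ℝ≥0∞) := by rw [one_mul, ENNReal.ofReal_coe_nnreal]
    exact le_of_tendsto (hleft f) hev
  exact absurd hEfy (not_le.mpr hy)

end Aux

/-- **Characterization of lower semicontinuity, constant kernel case** (Theorem 3.9):
for symmetric reflexive `E` with `ker ‖·‖_L = ℝ·1` and finite elementary resistance,
(sequential) lower semicontinuity w.r.t. pointwise convergence is equivalent to
left-continuity together with completeness of the quotient normed space
`(M(E)/ℝ·1, ‖·‖_L)`. -/
theorem lsc_characterization_constant_kernel {X : Type*} [Nonempty X]
    (E : (X → ℝ) → ℝ≥0∞)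
    (hconv : ConvexENNReal E) (h0 : E 0 = 0) (hsym : ∀ f : X → ℝ, E (-f) = E f)
    (hrefl : ReflexiveForm E)
    (hker₁ : ∀ c : ℝ, (fun _ => c : X → ℝ) ∈ modularCone E ∧
      luxemburg E (fun _ => c) = 0)
    (hker₂ : ∀ f ∈ modularCone E, luxemburg E f = 0 → ∃ c : ℝ, f = fun _ => c)
    (hfin : ∀ x y : X, eRes E x y ≠ ⊤) :
    (LowerSemicontinuous E ↔
      (LeftContinuousFunctional E ∧
        ∀ f : ℕ → X → ℝ, (∀ n, f n ∈ modularCone E) →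
          (∀ ε : ℝ≥0∞, 0 < ε → ∃ N : ℕ, ∀ m ≥ N, ∀ n ≥ N, luxemburg E (f m - f n) < ε) →
          ∃ g ∈ modularCone E,
            Filter.Tendsto (fun n => luxemburg E (f n - g)) Filter.atTop (nhds 0))) ∧
    (SeqLowerSemicontinuous E ↔
      (LeftContinuousFunctional E ∧
        ∀ f : ℕ → X → ℝ, (∀ n, f n ∈ modularCone E) →
          (∀ ε : ℝ≥0∞, 0 < ε → ∃ N : ℕ, ∀ m ≥ N, ∀ n ≥ N, luxemburg E (f m - f n) < ε) →
          ∃ g ∈ modularCone E,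
            Filter.Tendsto (fun n => luxemburg E (f n - g)) Filter.atTop (nhds 0))) := by
  have hseq_iff : SeqLowerSemicontinuous E ↔
      (LeftContinuousFunctional E ∧
        ∀ f : ℕ → X → ℝ, (∀ n, f n ∈ modularCone E) →
          (∀ ε : ℝ≥0∞, 0 < ε → ∃ N : ℕ, ∀ m ≥ N, ∀ n ≥ N, luxemburg E (f m - f n) < ε) →
          ∃ g ∈ modularCone E,
            Filter.Tendsto (fun n => luxemburg E (f n - g)) Filter.atTop (nhds 0)) := by
    constructor
    · intro hseq
      exact ⟨seq_to_leftcont hconv h0 hseq,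
        seq_to_complete hconv h0 hsym hseq hker₁ hfin⟩
    · rintro ⟨hleft, hcomp⟩
      exact lsc_to_seq (hard_direction hconv h0 hsym hrefl hker₁ hfin hleft hcomp)
  refine ⟨?_, hseq_iff⟩
  constructor
  · intro hlsc
    exact hseq_iff.mp (lsc_to_seq hlsc)
  · rintro ⟨hleft, hcomp⟩
    exact hard_direction hconv h0 hsym hrefl hker₁ hfin hleft hcomp
end
end
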